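/- arXiv:1901.02475 — 10 statements merged into one kernel-verified Lean document; each statement's English description precedes it below -/
import Mathlib

section
/- Let G be a bipartite graph with partite sets X and Y, and let f : X → ℕ be a function taking positive values. If for every subset S ⊆ X it holds that |N_G(S)| ≥ Σ_{v∈S} f(v), then G has a subgraph H such that X ⊆ V(H), deg_H(u) = f(u) for every u ∈ X, and deg_H(v) = 1 for every v ∈ Y ∩ V(H). -/
open SimpleGraph

variable {V : Type*}

/-- The disjoint union `P2 ∪ P3`: edge 0-1, path 2-3-4, on `Fin 5`. -/
def P2P3 : SimpleGraph (Fin 5) := SimpleGraph.fromRel (fun a b =>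
  (a = 0 ∧ b = 1) ∨ (a = 2 ∧ b = 3) ∨ (a = 3 ∧ b = 4))

/-- `G` has no induced subgraph isomorphic to `P2 ∪ P3`. -/
def P2P3Free (G : SimpleGraph V) : Prop :=
  ¬ ∃ f : Fin 5 ↪ V, ∀ a b, P2P3.Adj a b ↔ G.Adj (f a) (f b)

/-- The number of connected components of `G - S`. -/
noncomputable def numComponents [Fintype V] (G : SimpleGraph V) (S : Finset V) : ℕ :=
  Nat.card ((G.induce ((↑S : Set V)ᶜ)).ConnectedComponent)

/-- `G` is `t`-tough: `|S| ≥ t·c(G-S)` whenever `c(G-S) ≥ 2`. -/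
def IsTough [Fintype V] (t : ℝ) (G : SimpleGraph V) : Prop :=
  ∀ S : Finset V, 2 ≤ numComponents G S → t * numComponents G S ≤ S.card

/-!
Replace every `x ∈ X` by `f x` copies, each adjacent to the neighbours of `x`. The hypothesis on
`N_G(S)` is exactly Hall's condition for the copies, so an injection `g` sends every copy to a
neighbour of its original. The edges `x — g (x, i)` form `H`: each `x ∈ X` gets `f x` distinct
neighbours and, as `g` is injective with image in `Y`, each vertex of `Y` in `H` gets exactly one.
-/

open Finset Function

theorem Finset.exists_injective_sigma_of_forall_sum_le_card_biUnion {ι α : Type*}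
    [DecidableEq α] (t : ι → Finset α) (f : ι → ℕ)
    (h : ∀ s : Finset ι, ∑ i ∈ s, f i ≤ #(s.biUnion t)) :
    ∃ g : (Σ i, Fin (f i)) → α, Injective g ∧ ∀ p : Σ i, Fin (f i), g p ∈ t p.1 := by
  classical
  refine (all_card_le_biUnion_card_iff_exists_injective fun p : Σ i, Fin (f i) => t p.1).mp
    fun s => ?_
  calc #s ≤ #((s.image Sigma.fst).sigma fun i => (univ : Finset (Fin (f i)))) :=
        card_le_card fun p hp => mem_sigma.2 ⟨mem_image_of_mem _ hp, mem_univ _⟩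
    _ = ∑ i ∈ s.image Sigma.fst, f i := by simp
    _ ≤ #((s.image Sigma.fst).biUnion t) := h _
    _ = #(s.biUnion fun p => t p.1) := by rw [image_biUnion]

namespace SimpleGraph.Subgraph

variable {ι : Type*} {G : SimpleGraph V} {c g : ι → V} {A : Set V}

@[simps]
def ofAdjFamily (hadj : ∀ i, G.Adj (c i) (g i)) (hcA : ∀ i, c i ∈ A) : G.Subgraph where
  verts := A ∪ Set.range g
  Adj u v := ∃ i, (c i = u ∧ g i = v) ∨ (c i = v ∧ g i = u)
  adj_sub := by
    rintro u v ⟨i, ⟨rfl, rfl⟩ | ⟨rfl, rfl⟩⟩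
    exacts [hadj i, (hadj i).symm]
  edge_vert := by
    rintro u v ⟨i, ⟨rfl, -⟩ | ⟨-, rfl⟩⟩
    exacts [Or.inl (hcA i), Or.inr ⟨i, rfl⟩]
  symm := ⟨fun _ _ ⟨i, h⟩ => ⟨i, h.symm⟩⟩

variable (hadj : ∀ i, G.Adj (c i) (g i)) (hcA : ∀ i, c i ∈ A)

theorem neighborSet_ofAdjFamily_of_mem (hgA : ∀ i, g i ∉ A) {u : V} (hu : u ∈ A) :
    (ofAdjFamily hadj hcA).neighborSet u = g '' (c ⁻¹' {u}) := by
  ext v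
  simp only [mem_neighborSet, ofAdjFamily_adj]
  constructor
  · rintro ⟨i, ⟨rfl, rfl⟩ | ⟨-, rfl⟩⟩
    exacts [⟨i, rfl, rfl⟩, absurd hu (hgA i)]
  · rintro ⟨i, rfl, rfl⟩
    exact ⟨i, .inl ⟨rfl, rfl⟩⟩

theorem neighborSet_ofAdjFamily_apply (hgA : ∀ i, g i ∉ A) (hg : Injective g) (j : ι) :
    (ofAdjFamily hadj hcA).neighborSet (g j) = {c j} := by
  ext v
  simp only [mem_neighborSet, ofAdjFamily_adj]
  constructor
  · rintro ⟨i, ⟨hi, -⟩ | ⟨rfl, hij⟩⟩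
    exacts [absurd (hi ▸ hcA i) (hgA j), congrArg c (hg hij)]
  · rintro rfl
    exact ⟨j, .inr ⟨rfl, rfl⟩⟩

end SimpleGraph.Subgraph

theorem SimpleGraph.exists_injective_sigma_adj_of_forall_sum_le_ncard {G : SimpleGraph V}
    [G.LocallyFinite] (X : Finset V) (f : V → ℕ)
    (hN : ∀ S ⊆ X, (∑ v ∈ S, f v) ≤ {v | ∃ u ∈ S, G.Adj u v}.ncard) :
    ∃ g : (Σ x : X, Fin (f x)) → V, Injective g ∧
      ∀ p : Σ x : X, Fin (f x), G.Adj p.1 (g p) := by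
  classical
  obtain ⟨g, hg, hgN⟩ := exists_injective_sigma_of_forall_sum_le_card_biUnion
    (fun x : X => G.neighborFinset x) (fun x => f x) fun s => by
      have hs : {v | ∃ u ∈ s.map (.subtype _), G.Adj u v} =
          ↑(s.biUnion fun x => G.neighborFinset x) := by
        ext; simp
      have hS := hN (s.map (.subtype _)) fun v hv => by
        obtain ⟨x, -, rfl⟩ := mem_map.1 hv
        exact x.2
      rwa [hs, Set.ncard_coe_finset, sum_map] at hS
  exact ⟨g, hg, fun p => (G.mem_neighborFinset _ _).1 (hgN p)⟩

open SimpleGraph.Subgraph in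
theorem stmt1_general [Fintype V] (G : SimpleGraph V) (X Y : Finset V)
    (hdisj : Disjoint X Y)
    (hbip : ∀ u v, G.Adj u v → (u ∈ X ∧ v ∈ Y) ∨ (u ∈ Y ∧ v ∈ X))
    (f : V → ℕ)
    (hN : ∀ S ⊆ X, (∑ v ∈ S, f v) ≤ {v | ∃ u ∈ S, G.Adj u v}.ncard) :
    ∃ H : G.Subgraph, ↑X ⊆ H.verts ∧ (∀ u ∈ X, (H.neighborSet u).ncard = f u) ∧
      ∀ v ∈ (↑Y ∩ H.verts : Set V), (H.neighborSet v).ncard = 1 := by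
  classical
  obtain ⟨g, hg, hadj⟩ := G.exists_injective_sigma_adj_of_forall_sum_le_ncard X f hN
  have hgX p : g p ∉ X := fun hpX => by
    have := hbip _ _ (hadj p)
    grind [Finset.disjoint_left]
  refine ⟨ofAdjFamily hadj fun p => p.1.2, fun _ => Or.inl, fun x hx => ?_, ?_⟩
  · rw [neighborSet_ofAdjFamily_of_mem hadj _ hgX hx, hg.injOn.ncard_image]
    have hfiber : (fun p : Σ x : X, Fin (f x) => (p.1 : V)) ⁻¹' {x} =
        Set.range (Sigma.mk ⟨x, hx⟩) := by
      ext ⟨⟨y, hy⟩, i⟩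
      simp
    rw [hfiber, Set.ncard_range_of_injective sigma_mk_injective, Nat.card_eq_fintype_card,
      Fintype.card_fin]
  · rintro v ⟨hvY, hvX | ⟨p, rfl⟩⟩
    · exact absurd hvX (Finset.disjoint_right.1 hdisj hvY)
    · rw [neighborSet_ofAdjFamily_apply hadj _ hgX hg, Set.ncard_singleton]

theorem stmt1 [Fintype V] (G : SimpleGraph V) (X Y : Finset V)
    (hpart : ∀ v, v ∈ X ∨ v ∈ Y) (hdisj : Disjoint X Y)
    (hbip : ∀ u v, G.Adj u v → (u ∈ X ∧ v ∈ Y) ∨ (u ∈ Y ∧ v ∈ X))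
    (f : V → ℕ) (hf : ∀ v ∈ X, 0 < f v)
    (hN : ∀ S ⊆ X, (∑ v ∈ S, f v) ≤ {v | ∃ u ∈ S, G.Adj u v}.ncard) :
    ∃ H : G.Subgraph, ↑X ⊆ H.verts ∧ (∀ u ∈ X, (H.neighborSet u).ncard = f u) ∧
      ∀ v ∈ (↑Y ∩ H.verts : Set V), (H.neighborSet v).ncard = 1 :=
  stmt1_general G X Y hdisj hbip f hN
end

section
/- Let G be a (P2 ∪ P3)-free graph and S ⊆ V(G) a cutset of G. If G - S has a component that is not a clique, then all other components of G - S consist of a single vertex. -/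
open SimpleGraph

variable {V : Type*}

instance : DecidableRel P2P3.Adj := fun a b =>
  decidable_of_iff _ (SimpleGraph.fromRel_adj _ a b).symm

lemma build_embedding {G : SimpleGraph V} (hfree : P2P3Free G) {p q a b c : V}
    (hPQ : G.Adj p q) (hAB : G.Adj a b) (hBC : G.Adj b c)
    (hAC : ¬ G.Adj a c) (hACne : a ≠ c)
    (hPA : ¬ G.Adj p a) (hPB : ¬ G.Adj p b) (hPC : ¬ G.Adj p c)
    (hQA : ¬ G.Adj q a) (hQB : ¬ G.Adj q b) (hQC : ¬ G.Adj q c)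
    (hpa : p ≠ a) (hpb : p ≠ b) (hpc : p ≠ c)
    (hqa : q ≠ a) (hqb : q ≠ b) (hqc : q ≠ c) : False := by
  set l : Fin 5 → V := ![p, q, a, b, c] with hl
  have hinj : Function.Injective l := by
    intro i j hij
    fin_cases i <;> fin_cases j <;>
      (try simp [hl] at hij) <;>
    first
      | rfl
      | exact absurd hij hPQ.ne   | exact absurd hij.symm hPQ.ne
      | exact absurd hij hAB.ne   | exact absurd hij.symm hAB.ne
      | exact absurd hij hBC.ne   | exact absurd hij.symm hBC.ne
      | exact absurd hij hACne    | exact absurd hij.symm hACne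
      | exact absurd hij hpa      | exact absurd hij.symm hpa
      | exact absurd hij hpb      | exact absurd hij.symm hpb
      | exact absurd hij hpc      | exact absurd hij.symm hpc
      | exact absurd hij hqa      | exact absurd hij.symm hqa
      | exact absurd hij hqb      | exact absurd hij.symm hqb
      | exact absurd hij hqc      | exact absurd hij.symm hqc
  refine hfree ⟨⟨l, hinj⟩, ?_⟩
  intro i j
  show P2P3.Adj i j ↔ G.Adj (l i) (l j)
  fin_cases i <;> fin_cases j <;>
    (try simp only [hl]; simp) <;>
  first
    | exact iff_of_true (by decide) hPQ
    | exact iff_of_true (by decide) hPQ.symm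
    | exact iff_of_true (by decide) hAB
    | exact iff_of_true (by decide) hAB.symm
    | exact iff_of_true (by decide) hBC
    | exact iff_of_true (by decide) hBC.symm
    | exact iff_of_false (by decide) (G.irrefl)
    | exact iff_of_false (by decide) hAC
    | exact iff_of_false (by decide) (fun h => hAC h.symm)
    | exact iff_of_false (by decide) hPA
    | exact iff_of_false (by decide) (fun h => hPA h.symm)
    | exact iff_of_false (by decide) hPB
    | exact iff_of_false (by decide) (fun h => hPB h.symm)
    | exact iff_of_false (by decide) hPC
    | exact iff_of_false (by decide) (fun h => hPC h.symm)
    | exact iff_of_false (by decide) hQA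
    | exact iff_of_false (by decide) (fun h => hQA h.symm)
    | exact iff_of_false (by decide) hQB
    | exact iff_of_false (by decide) (fun h => hQB h.symm)
    | exact iff_of_false (by decide) hQC
    | exact iff_of_false (by decide) (fun h => hQC h.symm)

lemma exists_induced_P3 {α : Type*} {H : SimpleGraph α} {x y : α} (W : H.Walk x y) :
    x ≠ y → ¬ H.Adj x y → ∃ a b c, H.Adj a b ∧ H.Adj b c ∧ ¬ H.Adj a c ∧ a ≠ c ∧
      H.Reachable x a ∧ H.Reachable x b ∧ H.Reachable x c := by
  induction W with
  | nil => intro hxy _; exact absurd rfl hxy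
  | @cons u w v h W ih =>
    intro hxy hadj
    by_cases hwv : w = v
    · subst hwv; exact absurd h hadj
    by_cases hA : H.Adj w v
    · exact ⟨u, w, v, h, hA, hadj, hxy, Reachable.refl u, h.reachable,
        h.reachable.trans hA.reachable⟩
    · obtain ⟨a, b, c, h1, h2, h3, h4, r1, r2, r3⟩ := ih hwv hA
      exact ⟨a, b, c, h1, h2, h3, h4, h.reachable.trans r1, h.reachable.trans r2,
        h.reachable.trans r3⟩


theorem stmt2 [Fintype V] (G : SimpleGraph V) (hfree : P2P3Free G) (S : Finset V)
    (hcut : 2 ≤ numComponents G S)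
    (D : (G.induce ((↑S : Set V)ᶜ)).ConnectedComponent)
    (hD : ¬ G.IsClique (Subtype.val '' D.supp)) :
    ∀ D' : (G.induce ((↑S : Set V)ᶜ)).ConnectedComponent, D' ≠ D →
      (Subtype.val '' D'.supp).ncard = 1 := by
  classical
  -- extract an induced P3 in D
  simp only [SimpleGraph.isClique_iff, Set.Pairwise, not_forall] at hD
  obtain ⟨x, hx, y, hy, hxy, hnadj⟩ := hD
  obtain ⟨x', hx', rfl⟩ := hx
  obtain ⟨y', hy', rfl⟩ := hy
  rw [SimpleGraph.ConnectedComponent.mem_supp_iff] at hx' hy'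
  have hx'y' : x' ≠ y' := fun h => hxy (by rw [h])
  have hnadj' : ¬ (G.induce ((↑S : Set V)ᶜ)).Adj x' y' := fun h => hnadj h
  have hreach : (G.induce ((↑S : Set V)ᶜ)).Reachable x' y' :=
    SimpleGraph.ConnectedComponent.exact (hx'.trans hy'.symm)
  obtain ⟨a, b, c, hab, hbc, hnac, hac, ra, rb, rc⟩ :=
    exists_induced_P3 hreach.some hx'y' hnadj'
  have haD := (SimpleGraph.ConnectedComponent.sound ra.symm).trans hx'
  have hbD := (SimpleGraph.ConnectedComponent.sound rb.symm).trans hx'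
  have hcD := (SimpleGraph.ConnectedComponent.sound rc.symm).trans hx'
  intro D' hD'
  have huniq : ∀ u w : ((↑S : Set V)ᶜ : Set V), u ∈ D'.supp → w ∈ D'.supp → u = w := by
    intro u w hu hw
    by_contra huw
    rw [SimpleGraph.ConnectedComponent.mem_supp_iff] at hu hw
    have hr : (G.induce ((↑S : Set V)ᶜ)).Reachable u w :=
      SimpleGraph.ConnectedComponent.exact (hu.trans hw.symm)
    obtain ⟨p, q, hpq, hpD'⟩ : ∃ p q, (G.induce ((↑S : Set V)ᶜ)).Adj p q ∧
        (G.induce ((↑S : Set V)ᶜ)).connectedComponentMk p = D' := by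
      have W := hr.some
      cases W with
      | nil => exact absurd rfl huw
      | cons h W' => exact ⟨_, _, h, hu⟩
    have hqD' := (SimpleGraph.ConnectedComponent.sound hpq.reachable.symm).trans hpD'
    have cross : ∀ (s t : ((↑S : Set V)ᶜ : Set V)),
        (G.induce ((↑S : Set V)ᶜ)).connectedComponentMk s = D' →
        (G.induce ((↑S : Set V)ᶜ)).connectedComponentMk t = D → ¬ G.Adj ↑s ↑t := by
      intro s t hs ht hadj
      have h2 : (G.induce ((↑S : Set V)ᶜ)).Adj s t := hadj
      exact hD' (by rw [← hs, ← ht]; exact SimpleGraph.ConnectedComponent.sound h2.reachable)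
    have crossne : ∀ (s t : ((↑S : Set V)ᶜ : Set V)),
        (G.induce ((↑S : Set V)ᶜ)).connectedComponentMk s = D' →
        (G.induce ((↑S : Set V)ᶜ)).connectedComponentMk t = D → (s : V) ≠ (t : V) := by
      intro s t hs ht hst
      have h2 : s = t := Subtype.coe_injective hst
      exact hD' (by rw [← hs, ← ht, h2])
    exact build_embedding hfree (hpq : G.Adj ↑p ↑q) (hab : G.Adj ↑a ↑b) (hbc : G.Adj ↑b ↑c)
      (fun h => hnac h) (fun h => hac (Subtype.coe_injective h))
      (cross p a hpD' haD) (cross p b hpD' hbD) (cross p c hpD' hcD)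
      (cross q a hqD' haD) (cross q b hqD' hbD) (cross q c hqD' hcD)
      (crossne p a hpD' haD) (crossne p b hpD' hbD) (crossne p c hpD' hcD)
      (crossne q a hqD' haD) (crossne q b hqD' hbD) (crossne q c hqD' hcD)
  obtain ⟨v, hv⟩ := D'.exists_rep
  have hvmem : v ∈ D'.supp := by rw [SimpleGraph.ConnectedComponent.mem_supp_iff]; exact hv
  have hsupp : D'.supp = {v} := by
    ext w
    constructor
    · intro hw; exact huniq w v hw hvmem
    · intro hw; rw [hw]; exact hvmem
  rw [hsupp, Set.image_singleton, Set.ncard_singleton]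
end

section
/- Let G be a (P2 ∪ P3)-free graph and S a cutset of G. If G - S has at least two components each having at least two vertices, then every component of G - S is a clique. -/
open SimpleGraph

variable {V : Type*}

/-! If a component `C` of `G - S` is not a clique, a shortest path in `C` between two nonadjacent
vertices starts with an induced `P3`. Another component with at least two vertices contains an
edge, and as there are no edges between distinct components, this edge and the `P3` induce
`P2 ∪ P3`. -/

namespace SimpleGraph

variable {G : SimpleGraph V}

lemma Connected.exists_adj_adj_not_adj_ne (hG : G.Connected) {x y : V} (hxy : x ≠ y)
    (hnadj : ¬ G.Adj x y) : ∃ a b c, G.Adj a b ∧ G.Adj b c ∧ ¬ G.Adj a c ∧ a ≠ c := by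
  obtain ⟨p, hp⟩ := (hG x y).exists_walk_length_eq_dist
  exact p.exists_adj_adj_not_adj_ne hp ((hG x y).one_lt_dist_of_ne_of_not_adj hxy hnadj)

lemma ConnectedComponent.exists_adj_adj_not_adj_ne_of_not_isClique {C : G.ConnectedComponent}
    (hC : ¬ G.IsClique C.supp) : ∃ a ∈ C.supp, ∃ b ∈ C.supp, ∃ c ∈ C.supp,
      G.Adj a b ∧ G.Adj b c ∧ ¬ G.Adj a c ∧ a ≠ c := by
  obtain ⟨x, y, hxy, hnadj⟩ := (not_isClique_iff G).mp hC
  obtain ⟨a, b, c, hab, hbc, hac, hne⟩ :=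
    C.connected_toSimpleGraph.exists_adj_adj_not_adj_ne hxy hnadj
  exact ⟨a, a.2, b, b.2, c, c.2, hab, hbc, hac, fun h => hne (Subtype.ext h)⟩

lemma ConnectedComponent.exists_adj_of_nontrivial {C : G.ConnectedComponent}
    (hC : C.supp.Nontrivial) : ∃ u ∈ C.supp, ∃ w ∈ C.supp, G.Adj u w := by
  have := hC.coe_sort
  obtain ⟨u, hu, -⟩ := hC
  obtain ⟨w, huw⟩ := C.connected_toSimpleGraph.preconnected.exists_adj_of_nontrivial ⟨u, hu⟩
  exact ⟨u, hu, w, w.2, huw⟩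

lemma ConnectedComponent.not_reachable_of_ne {C C' : G.ConnectedComponent} (hne : C ≠ C')
    {u v : V} (hu : u ∈ C.supp) (hv : v ∈ C'.supp) : ¬ G.Reachable u v := fun h =>
  hne (by rw [← hu, ← hv]; exact ConnectedComponent.sound h)

end SimpleGraph

lemma P2P3Free.of_embedding {W : Type*} {G : SimpleGraph V} {H : SimpleGraph W}
    (f : G ↪g H) (hH : P2P3Free H) : P2P3Free G := fun ⟨e, he⟩ =>
  hH ⟨e.trans f.toEmbedding, fun a b => (he a b).trans f.map_adj_iff.symm⟩

lemma P2P3Free.adj_of_adj_adj_of_anticomplete {G : SimpleGraph V} (hG : P2P3Free G) {u w a b c : V}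
    (huw : G.Adj u w) (hab : G.Adj a b) (hbc : G.Adj b c) (hac : a ≠ c)
    (hsep : ∀ p ∈ [u, w], ∀ q ∈ [a, b, c], p ≠ q ∧ ¬ G.Adj p q) : G.Adj a c := by
  by_contra hnac
  simp only [List.mem_cons, List.not_mem_nil, or_false, forall_eq_or_imp, forall_eq] at hsep
  obtain ⟨⟨⟨hua, hua'⟩, ⟨hub, hub'⟩, ⟨huc, huc'⟩⟩, ⟨hwa, hwa'⟩, ⟨hwb, hwb'⟩, ⟨hwc, hwc'⟩⟩ := hsep
  have hinj : Function.Injective ![u, w, a, b, c] := by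
    intro i j hij
    fin_cases i <;> fin_cases j <;> simp_all [eq_comm, huw.ne, hab.ne, hbc.ne]
  refine hG ⟨⟨_, hinj⟩, fun i j => ?_⟩
  fin_cases i <;> fin_cases j <;> simp_all [P2P3, adj_comm]

lemma P2P3Free.isClique_supp {G : SimpleGraph V} (hG : P2P3Free G)
    {C C' : G.ConnectedComponent} (hne : C ≠ C') (hC' : C'.supp.Nontrivial) :
    G.IsClique C.supp := by
  by_contra hC
  obtain ⟨a, ha, b, hb, c, hc, hab, hbc, hnac, hac⟩ :=
    ConnectedComponent.exists_adj_adj_not_adj_ne_of_not_isClique hC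
  obtain ⟨u, hu, w, hw, huw⟩ := ConnectedComponent.exists_adj_of_nontrivial hC'
  have hsep : ∀ p ∈ C'.supp, ∀ q ∈ C.supp, p ≠ q ∧ ¬ G.Adj p q := fun p hp q hq =>
    have h := ConnectedComponent.not_reachable_of_ne hne.symm hp hq
    ⟨fun hpq => h (hpq ▸ Reachable.refl p), fun hpq => h hpq.reachable⟩
  exact hnac (hG.adj_of_adj_adj_of_anticomplete huw hab hbc hac (by simp [hsep, hu, hw, ha, hb, hc]))

theorem stmt3_general (G : SimpleGraph V) (hfree : P2P3Free G) (S : Finset V)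
    (hnt : ∃ D1 D2 : (G.induce ((↑S : Set V)ᶜ)).ConnectedComponent, D1 ≠ D2 ∧
      2 ≤ (Subtype.val '' D1.supp).ncard ∧ 2 ≤ (Subtype.val '' D2.supp).ncard) :
    ∀ D : (G.induce ((↑S : Set V)ᶜ)).ConnectedComponent,
      G.IsClique (Subtype.val '' D.supp) := by
  intro D
  obtain ⟨D1, D2, hD12, hD1, hD2⟩ := hnt
  have hnontrivial : ∀ D' : (G.induce ((↑S : Set V)ᶜ)).ConnectedComponent,
      2 ≤ (Subtype.val '' D'.supp).ncard → D'.supp.Nontrivial := fun D' hD' =>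
    (Set.one_lt_ncard_iff_nontrivial_and_finite.mp
      (by rwa [Set.ncard_image_of_injective _ Subtype.val_injective] at hD')).1
  obtain ⟨D', hne, hD'⟩ : ∃ D', D ≠ D' ∧ D'.supp.Nontrivial := by
    by_cases h : D = D1
    · exact ⟨D2, h ▸ hD12, hnontrivial D2 hD2⟩
    · exact ⟨D1, h, hnontrivial D1 hD1⟩
  exact isClique_induce_iff.mp ((hfree.of_embedding (Embedding.induce _)).isClique_supp hne hD')

theorem stmt3 [Fintype V] (G : SimpleGraph V) (hfree : P2P3Free G) (S : Finset V)
    (hcut : 2 ≤ numComponents G S)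
    (hnt : ∃ D1 D2 : (G.induce ((↑S : Set V)ᶜ)).ConnectedComponent, D1 ≠ D2 ∧
      2 ≤ (Subtype.val '' D1.supp).ncard ∧ 2 ≤ (Subtype.val '' D2.supp).ncard) :
    ∀ D : (G.induce ((↑S : Set V)ᶜ)).ConnectedComponent,
      G.IsClique (Subtype.val '' D.supp) :=
  stmt3_general G hfree S hnt
end

section
/- Let G be a (P2 ∪ P3)-free graph, S ⊆ V(G) a cutset of G, and x ∈ S. Suppose x is adjacent to vertices of exactly one component D of G - S, and G - S has a component with at least two vertices to which x is not adjacent. Then x is adjacent in G to all vertices of D. -/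
open SimpleGraph

variable {V : Type*}

instance inst_s4 : DecidableRel P2P3.Adj := fun a b => by
  unfold P2P3
  rw [SimpleGraph.fromRel_adj]
  infer_instance

lemma walk_flip {W : Type*} {H : SimpleGraph W} {P : W → Prop} {u w : W}
    (wk : H.Walk u w) : P u → ¬ P w →
    ∃ p q, H.Reachable u p ∧ H.Adj p q ∧ P p ∧ ¬ P q := by
  induction wk with
  | nil => intro hu hw; exact absurd hu hw
  | @cons a b c hab p ih =>
    intro hu hw
    by_cases hb : P b
    · obtain ⟨p', q', hr, ha, hp, hq⟩ := ih hb hw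
      exact ⟨p', q', (Adj.reachable hab).trans hr, ha, hp, hq⟩
    · exact ⟨a, b, Reachable.refl a, hab, hu, hb⟩

set_option maxHeartbeats 1000000 in
theorem stmt4 [Fintype V] (G : SimpleGraph V) (hfree : P2P3Free G) (S : Finset V)
    (hcut : 2 ≤ numComponents G S) (x : V) (hx : x ∈ S)
    (D : (G.induce ((↑S : Set V)ᶜ)).ConnectedComponent)
    (hadj : ∃ v ∈ D.supp, G.Adj x ↑v)
    (honly : ∀ D' : (G.induce ((↑S : Set V)ᶜ)).ConnectedComponent,
      (∃ v ∈ D'.supp, G.Adj x ↑v) → D' = D)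
    (hnt : ∃ D'' : (G.induce ((↑S : Set V)ᶜ)).ConnectedComponent,
      2 ≤ (Subtype.val '' D''.supp).ncard ∧ ¬ ∃ v ∈ D''.supp, G.Adj x ↑v) :
    ∀ v ∈ D.supp, G.Adj x ↑v := by
  by_contra hcon
  push_neg at hcon
  obtain ⟨w, hwD, hwx⟩ := hcon
  obtain ⟨u, huD, hux⟩ := hadj
  obtain ⟨D'', hcard, hnoadj⟩ := hnt
  push_neg at hnoadj
  -- D'' ≠ D
  have hne : D'' ≠ D := by
    intro h; exact hnoadj u (by rw [h]; exact huD) hux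
  -- find flip edge in D
  have hreach : (G.induce ((↑S : Set V)ᶜ)).Reachable u w := by
    rw [ConnectedComponent.mem_supp_iff] at huD hwD
    exact ConnectedComponent.eq.mp (huD.trans hwD.symm)
  obtain ⟨p, q, hup, hpq, hpx, hqx⟩ :=
    walk_flip (P := fun v : (((↑S : Set V))ᶜ : Set V) => G.Adj x ↑v) hreach.some hux hwx
  have hpD : p ∈ D.supp := by
    rw [ConnectedComponent.mem_supp_iff] at huD ⊢
    rw [← huD]; exact ConnectedComponent.eq.mpr hup.symm
  have hqD : q ∈ D.supp := by
    rw [ConnectedComponent.mem_supp_iff] at hpD ⊢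
    rw [← hpD]; exact ConnectedComponent.eq.mpr hpq.reachable.symm
  -- find edge in D''
  have hfin : (Subtype.val '' D''.supp).Finite := Set.toFinite _
  obtain ⟨va, vb, hva, hvb, hab⟩ := (Set.one_lt_ncard_iff hfin).mp (by omega)
  obtain ⟨a, haD, rfl⟩ := hva
  obtain ⟨b, hbD, rfl⟩ := hvb
  have hab' : a ≠ b := fun h => hab (by rw [h])
  have hreach2 : (G.induce ((↑S : Set V)ᶜ)).Reachable a b := by
    rw [ConnectedComponent.mem_supp_iff] at haD hbD
    exact ConnectedComponent.eq.mp (haD.trans hbD.symm)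
  obtain ⟨c, hac⟩ : ∃ c, (G.induce ((↑S : Set V)ᶜ)).Adj a c := by
    obtain ⟨wk⟩ := hreach2
    cases wk with
    | nil => exact absurd rfl hab'
    | cons h _ => exact ⟨_, h⟩
  have hcD : c ∈ D''.supp := by
    rw [ConnectedComponent.mem_supp_iff] at haD ⊢
    rw [← haD]; exact ConnectedComponent.eq.mpr hac.reachable.symm
  -- adjacency facts
  have hHG : ∀ {s t : ((↑S : Set V)ᶜ : Set V)}, (G.induce ((↑S : Set V)ᶜ)).Adj s t → G.Adj ↑s ↑t := by
    intro s t h; simpa using h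
  have hGH : ∀ {s t : ((↑S : Set V)ᶜ : Set V)}, G.Adj ↑s ↑t → (G.induce ((↑S : Set V)ᶜ)).Adj s t := by
    intro s t h; simpa using h
  -- no edges between D'' and D
  have hsep : ∀ {s t : ((↑S : Set V)ᶜ : Set V)}, s ∈ D''.supp → t ∈ D.supp →
      ¬ G.Adj ↑s ↑t := by
    intro s t hs ht hG
    rw [ConnectedComponent.mem_supp_iff] at hs ht
    exact hne (by rw [← hs, ← ht]; exact ConnectedComponent.eq.mpr (hGH hG).reachable)
  -- x not in Sᶜ
  have hxne : ∀ s : ((↑S : Set V)ᶜ : Set V), (s : V) ≠ x := by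
    intro s h
    have := s.2
    rw [h] at this
    exact this (by simpa using hx)
  -- distinctness in D'' vs D
  have hdiff : ∀ {s t : ((↑S : Set V)ᶜ : Set V)}, s ∈ D''.supp → t ∈ D.supp →
      (s : V) ≠ (t : V) := by
    intro s t hs ht h
    rw [ConnectedComponent.mem_supp_iff] at hs ht
    apply hne
    rw [← hs, ← ht]
    congr 1
    exact Subtype.ext h
  have hacne : (a : V) ≠ (c : V) := fun h => (hHG hac).ne (by exact_mod_cast h)
  have hpqne : (p : V) ≠ (q : V) := fun h => (hHG hpq).ne (by exact_mod_cast h)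
  -- build the embedding
  apply hfree
  refine ⟨⟨![(a : V), c, q, p, x], ?_⟩, ?_⟩
  · intro i j hij
    fin_cases i <;> fin_cases j <;>
      simp only [Matrix.cons_val_zero, Matrix.cons_val_one, Matrix.head_cons,
        Matrix.cons_val_two, Matrix.tail_cons, Matrix.cons_val_three,
        Matrix.cons_val_four, Matrix.cons_val_fin_one] at hij <;>
      first
        | rfl
        | exact absurd hij hacne | exact absurd hij hacne.symm
        | exact absurd hij hpqne | exact absurd hij hpqne.symm
        | exact absurd hij (hdiff haD hqD) | exact absurd hij (hdiff haD hqD).symm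
        | exact absurd hij (hdiff haD hpD) | exact absurd hij (hdiff haD hpD).symm
        | exact absurd hij (hdiff hcD hqD) | exact absurd hij (hdiff hcD hqD).symm
        | exact absurd hij (hdiff hcD hpD) | exact absurd hij (hdiff hcD hpD).symm
        | exact absurd hij (hxne a).symm | exact absurd hij (hxne c).symm
        | exact absurd hij (hxne q).symm | exact absurd hij (hxne p).symm
        | exact absurd hij (hxne a) | exact absurd hij (hxne c)
        | exact absurd hij (hxne q) | exact absurd hij (hxne p)
  · intro i j
    have e01 : G.Adj ↑a ↑c := hHG hac
    have e23 : G.Adj ↑q ↑p := (hHG hpq).symm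
    have e34 : G.Adj ↑p x := hpx.symm
    have n02 : ¬ G.Adj ↑a ↑q := hsep haD hqD
    have n03 : ¬ G.Adj ↑a ↑p := hsep haD hpD
    have n12 : ¬ G.Adj ↑c ↑q := hsep hcD hqD
    have n13 : ¬ G.Adj ↑c ↑p := hsep hcD hpD
    have n04 : ¬ G.Adj ↑a x := fun h => hnoadj a haD h.symm
    have n14 : ¬ G.Adj ↑c x := fun h => hnoadj c hcD h.symm
    have n24 : ¬ G.Adj ↑q x := fun h => hqx h.symm
    fin_cases i <;> fin_cases j <;>
      simp only [Function.Embedding.coeFn_mk, Fin.isValue, Fin.mk_zero, Fin.mk_one,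
        show ((⟨2, by omega⟩ : Fin 5) = 2) from rfl, show ((⟨3, by omega⟩ : Fin 5) = 3) from rfl,
        show ((⟨4, by omega⟩ : Fin 5) = 4) from rfl,
        Matrix.cons_val_zero, Matrix.cons_val_one,
        Matrix.head_cons, Matrix.cons_val_two, Matrix.tail_cons, Matrix.cons_val_three,
        Matrix.cons_val_four, Matrix.cons_val_fin_one] <;>
      first
        | exact iff_of_false (by decide) (fun h => absurd h (G.irrefl))
        | exact iff_of_false (by decide) n02
        | exact iff_of_false (by decide) n03
        | exact iff_of_false (by decide) n12
        | exact iff_of_false (by decide) n13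
        | exact iff_of_false (by decide) n04
        | exact iff_of_false (by decide) n14
        | exact iff_of_false (by decide) n24
        | exact iff_of_false (by decide) (fun h => n02 h.symm)
        | exact iff_of_false (by decide) (fun h => n03 h.symm)
        | exact iff_of_false (by decide) (fun h => n12 h.symm)
        | exact iff_of_false (by decide) (fun h => n13 h.symm)
        | exact iff_of_false (by decide) (fun h => n04 h.symm)
        | exact iff_of_false (by decide) (fun h => n14 h.symm)
        | exact iff_of_false (by decide) (fun h => n24 h.symm)
        | exact iff_of_true (by decide) e01
        | exact iff_of_true (by decide) e01.symm
        | exact iff_of_true (by decide) e23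
        | exact iff_of_true (by decide) e23.symm
        | exact iff_of_true (by decide) e34
        | exact iff_of_true (by decide) e34.symm
end

section
/- Let G be a connected (P2 ∪ P3)-free graph and S ⊆ V(G) a cutset such that each vertex in S has neighbors in at least two components of G - S. Then for every clique component D of G - S with at least two vertices and every vertex x ∈ S, x has a neighbor in D. -/
open SimpleGraph

variable {V : Type*}

lemma cross_nonadj {G : SimpleGraph V} {s : Set V}
    {C C' : (G.induce s).ConnectedComponent} (h : C ≠ C')
    {a b : s} (ha : a ∈ C.supp) (hb : b ∈ C'.supp) : ¬ G.Adj ↑a ↑b := by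
  intro hadj
  have hab : (G.induce s).Adj a b := hadj
  rw [ConnectedComponent.mem_supp_iff] at ha hb
  exact h (ha ▸ hb ▸ ConnectedComponent.sound hab.reachable)

lemma cross_ne {G : SimpleGraph V} {s : Set V}
    {C C' : (G.induce s).ConnectedComponent} (h : C ≠ C')
    {a b : s} (ha : a ∈ C.supp) (hb : b ∈ C'.supp) : (a : V) ≠ (b : V) := by
  intro hab
  rw [ConnectedComponent.mem_supp_iff] at ha hb
  exact h (ha ▸ hb ▸ congrArg _ (Subtype.ext hab))

theorem stmt5 [Fintype V] (G : SimpleGraph V) (hconn : G.Connected) (hfree : P2P3Free G)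
    (S : Finset V) (hcut : 2 ≤ numComponents G S)
    (hS : ∀ x ∈ S, 2 ≤ {D : (G.induce ((↑S : Set V)ᶜ)).ConnectedComponent |
      ∃ v ∈ D.supp, G.Adj x ↑v}.ncard) :
    ∀ D : (G.induce ((↑S : Set V)ᶜ)).ConnectedComponent,
      G.IsClique (Subtype.val '' D.supp) → 2 ≤ (Subtype.val '' D.supp).ncard →
      ∀ x ∈ S, ∃ v ∈ D.supp, G.Adj x ↑v := by
  intro D hclique hcard x hx
  by_contra hcon
  push_neg at hcon
  -- two distinct vertices in D
  obtain ⟨u', hu', v', hv', huv'⟩ := (Set.one_lt_ncard (Set.toFinite _)).mp hcard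
  obtain ⟨u, hu, rfl⟩ := hu'
  obtain ⟨v, hv, rfl⟩ := hv'
  have hadjuv : G.Adj ↑u ↑v := hclique ⟨u, hu, rfl⟩ ⟨v, hv, rfl⟩ huv'
  -- two distinct components adjacent to x
  obtain ⟨C1, hC1, C2, hC2, hC12⟩ := (Set.one_lt_ncard (Set.toFinite _)).mp (hS x hx)
  obtain ⟨y, hy, hxy⟩ := hC1
  obtain ⟨z, hz, hxz⟩ := hC2
  have hC1D : C1 ≠ D := fun h => hcon y (h ▸ hy) hxy
  have hC2D : C2 ≠ D := fun h => hcon z (h ▸ hz) hxz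
  -- nonadjacencies and inequalities
  have nuy := cross_nonadj hC1D.symm hu hy
  have nuz := cross_nonadj hC2D.symm hu hz
  have nvy := cross_nonadj hC1D.symm hv hy
  have nvz := cross_nonadj hC2D.symm hv hz
  have nyz := cross_nonadj hC12 hy hz
  have nxu : ¬ G.Adj x ↑u := hcon u hu
  have nxv : ¬ G.Adj x ↑v := hcon v hv
  have euy := cross_ne hC1D.symm hu hy
  have euz := cross_ne hC2D.symm hu hz
  have evy := cross_ne hC1D.symm hv hy
  have evz := cross_ne hC2D.symm hv hz
  have eyz := cross_ne hC12 hy hz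
  have hxS : ∀ w : ((↑S : Set V)ᶜ : Set V), x ≠ ↑w := by
    intro w hw
    exact w.2 (hw ▸ hx)
  have exu := hxS u
  have exv := hxS v
  have exy := hxS y
  have exz := hxS z
  have hvu := hadjuv.symm
  have hyx := hxy.symm
  have hzx := hxz.symm
  have nyu : ¬ G.Adj ↑y ↑u := fun h => nuy h.symm
  have nzu : ¬ G.Adj ↑z ↑u := fun h => nuz h.symm
  have nyv : ¬ G.Adj ↑y ↑v := fun h => nvy h.symm
  have nzv : ¬ G.Adj ↑z ↑v := fun h => nvz h.symm
  have nzy : ¬ G.Adj ↑z ↑y := fun h => nyz h.symm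
  have nux : ¬ G.Adj ↑u x := fun h => nxu h.symm
  have nvx : ¬ G.Adj ↑v x := fun h => nxv h.symm
  have eyu : (↑y : V) ≠ ↑u := euy.symm
  have ezu : (↑z : V) ≠ ↑u := euz.symm
  have eyv : (↑y : V) ≠ ↑v := evy.symm
  have ezv : (↑z : V) ≠ ↑v := evz.symm
  have ezy : (↑z : V) ≠ ↑y := eyz.symm
  have eux : (↑u : V) ≠ x := exu.symm
  have evx : (↑v : V) ≠ x := exv.symm
  have eyx : (↑y : V) ≠ x := exy.symm
  have ezx : (↑z : V) ≠ x := exz.symm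
  have euv : (↑u : V) ≠ ↑v := hadjuv.ne
  have evu : (↑v : V) ≠ ↑u := hadjuv.ne'
  apply hfree
  refine ⟨⟨![↑u, ↑v, ↑y, x, ↑z], ?_⟩, ?_⟩
  · intro a b hab
    fin_cases a <;> fin_cases b <;>
      first
        | rfl
        | (simp only [Matrix.cons_val_zero, Matrix.cons_val_one, Matrix.head_cons,
            Matrix.cons_val_two, Matrix.tail_cons, Matrix.cons_val_three,
            Matrix.cons_val_four, Fin.mk_zero, Fin.mk_one, show (⟨2, by omega⟩ : Fin 5) = 2 from rfl,
            show (⟨3, by omega⟩ : Fin 5) = 3 from rfl, show (⟨4, by omega⟩ : Fin 5) = 4 from rfl] at hab;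
           exact absurd hab (by assumption))
  · intro a b
    fin_cases a <;> fin_cases b <;>
      simp only [Function.Embedding.coeFn_mk, Fin.mk_zero, Fin.mk_one,
        show (⟨2, by omega⟩ : Fin 5) = 2 from rfl, show (⟨3, by omega⟩ : Fin 5) = 3 from rfl,
        show (⟨4, by omega⟩ : Fin 5) = 4 from rfl,
        Matrix.cons_val_zero, Matrix.cons_val_one,
        Matrix.head_cons, Matrix.cons_val_two, Matrix.tail_cons, Matrix.cons_val_three,
        Matrix.cons_val_four] <;>
      (constructor <;> intro h') <;>
      first
        | assumption
        | exact absurd h' (by simp [P2P3])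
        | exact absurd h' (G.irrefl)
        | exact absurd h' (by assumption)
        | simp [P2P3]
end

section
/- Let G be a connected (P2 ∪ P3)-free graph and S ⊆ V(G) a cutset such that each vertex in S has neighbors in at least two components of G - S. If a vertex x ∈ S has neighbors in at least three components of G - S, then for every clique component D of G - S with at least two vertices, x is adjacent in G to at least |V(D)| - 1 vertices of D. -/
open SimpleGraph

variable {V : Type*}

theorem stmt6 [Fintype V] (G : SimpleGraph V) (hconn : G.Connected) (hfree : P2P3Free G)
    (S : Finset V) (hcut : 2 ≤ numComponents G S)
    (hS : ∀ x ∈ S, 2 ≤ {D : (G.induce ((↑S : Set V)ᶜ)).ConnectedComponent |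
      ∃ v ∈ D.supp, G.Adj x ↑v}.ncard)
    (x : V) (hx : x ∈ S)
    (hx3 : 3 ≤ {D : (G.induce ((↑S : Set V)ᶜ)).ConnectedComponent |
      ∃ v ∈ D.supp, G.Adj x ↑v}.ncard) :
    ∀ D : (G.induce ((↑S : Set V)ᶜ)).ConnectedComponent,
      G.IsClique (Subtype.val '' D.supp) → 2 ≤ (Subtype.val '' D.supp).ncard →
      (Subtype.val '' D.supp).ncard - 1 ≤
        ((Subtype.val '' D.supp) ∩ {v | G.Adj x v}).ncard := by
  intro D hclique hcard2
  by_contra hcon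
  push_neg at hcon
  have hsum := Set.ncard_inter_add_ncard_diff_eq_ncard (Subtype.val '' D.supp)
    {v | G.Adj x v} (Set.toFinite _)
  have h2 : 1 < ((Subtype.val '' D.supp) \ {v | G.Adj x v}).ncard := by omega
  obtain ⟨u, v, hu, hv, huvne⟩ := (Set.one_lt_ncard_iff (Set.toFinite _)).mp h2
  obtain ⟨u', hu'supp, rfl⟩ := hu.1
  obtain ⟨v', hv'supp, rfl⟩ := hv.1
  -- two other components with neighbors of x
  set T := {D' : (G.induce ((↑S : Set V)ᶜ)).ConnectedComponent | ∃ w ∈ D'.supp, G.Adj x ↑w} with hT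
  have hTsub : T ⊆ (T \ {D}) ∪ {D} := by
    intro C hC
    by_cases h : C = D
    · exact Or.inr h
    · exact Or.inl ⟨hC, h⟩
  have hT2 : 1 < (T \ {D}).ncard := by
    have h1 := Set.ncard_le_ncard hTsub (Set.toFinite _)
    have h2 := Set.ncard_union_le (T \ {D}) {D}
    have h3 : ({D} : Set (G.induce ((↑S : Set V)ᶜ)).ConnectedComponent).ncard = 1 := Set.ncard_singleton D
    omega
  obtain ⟨C1, C2, hC1, hC2, hC12⟩ := (Set.one_lt_ncard_iff (Set.toFinite _)).mp hT2
  obtain ⟨a', ha'supp, hxa⟩ := hC1.1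
  obtain ⟨b', hb'supp, hxb⟩ := hC2.1
  -- basic facts
  have key : ∀ (p q : ((↑S : Set V)ᶜ : Set V)), (G.induce ((↑S : Set V)ᶜ)).connectedComponentMk p ≠ (G.induce ((↑S : Set V)ᶜ)).connectedComponentMk q →
      ¬ G.Adj ↑p ↑q := by
    intro p q hne hadj
    exact hne (ConnectedComponent.sound (Adj.reachable (by simpa using hadj)))
  rw [ConnectedComponent.mem_supp_iff] at hu'supp hv'supp ha'supp hb'supp
  have hnotS : ∀ (p : ((↑S : Set V)ᶜ : Set V)), (↑p : V) ≠ x := by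
    intro p hp
    exact p.2 (by rw [hp]; exact_mod_cast hx)
  have hvalne : ∀ (p q : ((↑S : Set V)ᶜ : Set V)), (G.induce ((↑S : Set V)ᶜ)).connectedComponentMk p ≠ (G.induce ((↑S : Set V)ᶜ)).connectedComponentMk q →
      (↑p : V) ≠ ↑q := by
    intro p q hne hpq
    exact hne (by rw [Subtype.ext hpq])
  have hC1D : (G.induce ((↑S : Set V)ᶜ)).connectedComponentMk a' ≠ (G.induce ((↑S : Set V)ᶜ)).connectedComponentMk u' := by
    rw [ha'supp, hu'supp]; exact hC1.2
  have hC1Dv : (G.induce ((↑S : Set V)ᶜ)).connectedComponentMk a' ≠ (G.induce ((↑S : Set V)ᶜ)).connectedComponentMk v' := by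
    rw [ha'supp, hv'supp]; exact hC1.2
  have hC2D : (G.induce ((↑S : Set V)ᶜ)).connectedComponentMk b' ≠ (G.induce ((↑S : Set V)ᶜ)).connectedComponentMk u' := by
    rw [hb'supp, hu'supp]; exact hC2.2
  have hC2Dv : (G.induce ((↑S : Set V)ᶜ)).connectedComponentMk b' ≠ (G.induce ((↑S : Set V)ᶜ)).connectedComponentMk v' := by
    rw [hb'supp, hv'supp]; exact hC2.2
  have hC1C2 : (G.induce ((↑S : Set V)ᶜ)).connectedComponentMk a' ≠ (G.induce ((↑S : Set V)ᶜ)).connectedComponentMk b' := by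
    rw [ha'supp, hb'supp]; exact hC12
  -- adjacencies
  have e01 : G.Adj ↑u' ↑v' := hclique hu.1 hv.1 huvne
  -- non-adjacencies
  have nxu : ¬ G.Adj x ↑u' := hu.2
  have nxv : ¬ G.Adj x ↑v' := hv.2
  have nua : ¬ G.Adj ↑u' ↑a' := fun h => key a' u' hC1D h.symm
  have nva : ¬ G.Adj ↑v' ↑a' := fun h => key a' v' hC1Dv h.symm
  have nub : ¬ G.Adj ↑u' ↑b' := fun h => key b' u' hC2D h.symm
  have nvb : ¬ G.Adj ↑v' ↑b' := fun h => key b' v' hC2Dv h.symm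
  have nab : ¬ G.Adj ↑a' ↑b' := key a' b' hC1C2
  -- distinctness
  have dua : (↑u' : V) ≠ ↑a' := fun h => hvalne a' u' hC1D h.symm
  have dva : (↑v' : V) ≠ ↑a' := fun h => hvalne a' v' hC1Dv h.symm
  have dub : (↑u' : V) ≠ ↑b' := fun h => hvalne b' u' hC2D h.symm
  have dvb : (↑v' : V) ≠ ↑b' := fun h => hvalne b' v' hC2Dv h.symm
  have dab : (↑a' : V) ≠ ↑b' := hvalne a' b' hC1C2
  have dux : (↑u' : V) ≠ x := hnotS u'
  have dvx : (↑v' : V) ≠ x := hnotS v'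
  have dax : (↑a' : V) ≠ x := hnotS a'
  have dbx : (↑b' : V) ≠ x := hnotS b'
  have nux : ¬ G.Adj ↑u' x := fun h => nxu h.symm
  have nvx : ¬ G.Adj ↑v' x := fun h => nxv h.symm
  have nau : ¬ G.Adj ↑a' ↑u' := fun h => nua h.symm
  have nav : ¬ G.Adj ↑a' ↑v' := fun h => nva h.symm
  have nbu : ¬ G.Adj ↑b' ↑u' := fun h => nub h.symm
  have nbv : ¬ G.Adj ↑b' ↑v' := fun h => nvb h.symm
  have nba : ¬ G.Adj ↑b' ↑a' := fun h => nab h.symm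
  have e10 : G.Adj ↑v' ↑u' := e01.symm
  have e23 : G.Adj ↑a' x := hxa.symm
  have e43 : G.Adj ↑b' x := hxb.symm
  have dvu : (↑v' : V) ≠ ↑u' := fun h => huvne h.symm
  have dau : (↑a' : V) ≠ ↑u' := fun h => dua h.symm
  have dav : (↑a' : V) ≠ ↑v' := fun h => dva h.symm
  have dbu : (↑b' : V) ≠ ↑u' := fun h => dub h.symm
  have dbv : (↑b' : V) ≠ ↑v' := fun h => dvb h.symm
  have dba : (↑b' : V) ≠ ↑a' := fun h => dab h.symm
  have dxu : x ≠ (↑u' : V) := fun h => dux h.symm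
  have dxv : x ≠ (↑v' : V) := fun h => dvx h.symm
  have dxa : x ≠ (↑a' : V) := fun h => dax h.symm
  have dxb : x ≠ (↑b' : V) := fun h => dbx h.symm
  apply hfree
  refine ⟨⟨![↑u', ↑v', ↑a', x, ↑b'], ?_⟩, ?_⟩
  · intro i j h
    fin_cases i <;> fin_cases j <;>
      simp only [Matrix.cons_val_zero, Matrix.cons_val_one, Matrix.head_cons,
        Matrix.cons_val_two, Matrix.tail_cons, Matrix.cons_val_three,
        Matrix.cons_val_four, Matrix.head_fin_const, Matrix.cons_val_succ] at h <;>
      first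
        | rfl
        | exact absurd h (by assumption)
  · intro i j
    fin_cases i <;> fin_cases j <;>
      simp only [Matrix.cons_val_zero, Matrix.cons_val_one, Matrix.head_cons,
        Matrix.cons_val_two, Matrix.tail_cons, Matrix.cons_val_three,
        Matrix.cons_val_four, Matrix.cons_val_succ] <;>
      simp [P2P3, SimpleGraph.fromRel_adj, SimpleGraph.irrefl] <;>
      assumption
end

section
/- Let G be a connected (P2 ∪ P3)-free graph and S ⊆ V(G) a cutset such that each vertex in S has neighbors in at least two components of G - S. Let D1 and D2 be two clique components of G - S each with at least two vertices. Then for every vertex x ∈ S, either x is adjacent to at least |V(D_i)| - 1 vertices of D_i for both i = 1, 2, or x is adjacent to all vertices of at least one of D1, D2. -/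
open SimpleGraph

variable {V : Type*}

/-!
Suppose `x ∈ S` misses two vertices `a, b` of the clique component `D₁` and some vertex `c` of
`D₂`. If `x` has a neighbour `d ∈ D₂`, then `ab` together with the path `c d x` is an induced
`P2 ∪ P3`. Otherwise `x` has neighbours `v, w` in two components other than `D₂`, and an edge of
`D₂` together with the path `v x w` is an induced `P2 ∪ P3`.
-/

namespace SimpleGraph

variable {G : SimpleGraph V}

theorem P2P3Free.false_of_induced_copy (hfree : P2P3Free G) {v₀ v₁ v₂ v₃ v₄ : V}
    (h01 : G.Adj v₀ v₁) (h23 : G.Adj v₂ v₃) (h34 : G.Adj v₃ v₄)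
    (h02 : ¬G.Adj v₀ v₂) (h03 : ¬G.Adj v₀ v₃) (h04 : ¬G.Adj v₀ v₄)
    (h12 : ¬G.Adj v₁ v₂) (h13 : ¬G.Adj v₁ v₃) (h14 : ¬G.Adj v₁ v₄)
    (h24 : ¬G.Adj v₂ v₄) (hne24 : v₂ ≠ v₄) : False := by
  have d01 : v₀ ≠ v₁ := h01.ne
  have d23 : v₂ ≠ v₃ := h23.ne
  have d34 : v₃ ≠ v₄ := h34.ne
  have d02 : v₀ ≠ v₂ := fun h => h12 (h ▸ h01.symm)
  have d03 : v₀ ≠ v₃ := fun h => h04 (h ▸ h34)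
  have d04 : v₀ ≠ v₄ := fun h => h03 (h ▸ h34.symm)
  have d12 : v₁ ≠ v₂ := fun h => h02 (h ▸ h01)
  have d13 : v₁ ≠ v₃ := fun h => h14 (h ▸ h34)
  have d14 : v₁ ≠ v₄ := fun h => h13 (h ▸ h34.symm)
  refine hfree ⟨⟨![v₀, v₁, v₂, v₃, v₄], ?_⟩, ?_⟩
  · intro i j hij
    fin_cases i <;> fin_cases j <;> simp_all
  · intro a b
    show P2P3.Adj a b ↔ G.Adj (![v₀, v₁, v₂, v₃, v₄] a) (![v₀, v₁, v₂, v₃, v₄] b)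
    fin_cases a <;> fin_cases b <;> simp_all [P2P3, fromRel_adj, G.adj_comm]

variable {s : Set V}

theorem ConnectedComponent.not_adj_of_ne {C D : (G.induce s).ConnectedComponent} (h : C ≠ D)
    {u w : s} (hu : u ∈ C.supp) (hw : w ∈ D.supp) : ¬G.Adj u w := fun hadj =>
  h (ConnectedComponent.eq_of_common_vertex (C.mem_supp_of_adj_mem_supp hu hadj) hw)

theorem ConnectedComponent.exists_adj_of_isClique {B : (G.induce s).ConnectedComponent}
    (hB : G.IsClique (Subtype.val '' B.supp)) (hn : 2 ≤ (Subtype.val '' B.supp).ncard) :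
    ∃ c ∈ B.supp, ∃ d ∈ B.supp, G.Adj c d := by
  obtain ⟨_, _, ⟨c, hc, rfl⟩, ⟨d, hd, rfl⟩, hcd⟩ :=
    (Set.one_lt_ncard_iff (Set.finite_of_ncard_pos (by omega))).mp hn
  exact ⟨c, hc, d, hd, hB ⟨c, hc, rfl⟩ ⟨d, hd, rfl⟩ hcd⟩

theorem ConnectedComponent.exists_not_adj_of_ncard_lt [Finite V] {x : V}
    {D : (G.induce s).ConnectedComponent} (hD : G.IsClique (Subtype.val '' D.supp))
    (h : ¬(Subtype.val '' D.supp).ncard - 1 ≤ (Subtype.val '' D.supp ∩ {v | G.Adj x v}).ncard) :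
    ∃ a ∈ D.supp, ∃ b ∈ D.supp, G.Adj a b ∧ ¬G.Adj x a ∧ ¬G.Adj x b := by
  have hsplit := Set.ncard_inter_add_ncard_sdiff_eq_ncard (Subtype.val '' D.supp)
    {v | G.Adj x v} (Set.toFinite _)
  have hmissed : 1 < (Subtype.val '' D.supp \ {v | G.Adj x v}).ncard := by omega
  obtain ⟨_, _, ⟨⟨a, ha, rfl⟩, hxa⟩, ⟨⟨b, hb, rfl⟩, hxb⟩, hab⟩ :=
    (Set.one_lt_ncard_iff (Set.toFinite _)).mp hmissed
  exact ⟨a, ha, b, hb, hD ⟨a, ha, rfl⟩ ⟨b, hb, rfl⟩ hab, hxa, hxb⟩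

theorem P2P3Free.exists_adj_of_adj_mem_supp (hfree : P2P3Free G) {x : V}
    (hx : 2 ≤ {C : (G.induce s).ConnectedComponent | ∃ v ∈ C.supp, G.Adj x v}.ncard)
    {B : (G.induce s).ConnectedComponent} {c d : s} (hc : c ∈ B.supp) (hd : d ∈ B.supp)
    (hcd : G.Adj c d) : ∃ v ∈ B.supp, G.Adj x v := by
  by_contra! hB
  obtain ⟨C, C', ⟨v, hv, hxv⟩, ⟨w, hw, hxw⟩, hCC'⟩ :=
    (Set.one_lt_ncard_iff (Set.finite_of_ncard_pos (by omega))).mp hx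
  have hBC : B ≠ C := fun h => hB v (h ▸ hv) hxv
  have hBC' : B ≠ C' := fun h => hB w (h ▸ hw) hxw
  have hvw : (v : V) ≠ w := fun h =>
    hCC' (ConnectedComponent.eq_of_common_vertex hv (Subtype.val_injective h ▸ hw))
  exact hfree.false_of_induced_copy hcd hxv.symm hxw
    (ConnectedComponent.not_adj_of_ne hBC hc hv) (fun h => hB c hc h.symm)
    (ConnectedComponent.not_adj_of_ne hBC' hc hw) (ConnectedComponent.not_adj_of_ne hBC hd hv)
    (fun h => hB d hd h.symm) (ConnectedComponent.not_adj_of_ne hBC' hd hw)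
    (ConnectedComponent.not_adj_of_ne hCC' hv hw) hvw

theorem P2P3Free.forall_adj_of_not_adj_edge (hfree : P2P3Free G) {x : V} (hxs : x ∉ s)
    (hx : 2 ≤ {C : (G.induce s).ConnectedComponent | ∃ v ∈ C.supp, G.Adj x v}.ncard)
    {A B : (G.induce s).ConnectedComponent} (hAB : A ≠ B)
    {a b : s} (ha : a ∈ A.supp) (hb : b ∈ A.supp) (hab : G.Adj a b)
    (hxa : ¬G.Adj x a) (hxb : ¬G.Adj x b)
    (hB : G.IsClique (Subtype.val '' B.supp)) (hnB : 2 ≤ (Subtype.val '' B.supp).ncard) :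
    ∀ c ∈ B.supp, G.Adj x c := by
  obtain ⟨c₀, hc₀, d₀, hd₀, hcd₀⟩ := ConnectedComponent.exists_adj_of_isClique hB hnB
  obtain ⟨d, hd, hxd⟩ := hfree.exists_adj_of_adj_mem_supp hx hc₀ hd₀ hcd₀
  intro c hc
  by_contra hxc
  have hcd : G.Adj c d := hB ⟨c, hc, rfl⟩ ⟨d, hd, rfl⟩ fun h => hxc (h ▸ hxd)
  exact hfree.false_of_induced_copy hab hcd hxd.symm
    (ConnectedComponent.not_adj_of_ne hAB ha hc) (ConnectedComponent.not_adj_of_ne hAB ha hd)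
    (fun h => hxa h.symm) (ConnectedComponent.not_adj_of_ne hAB hb hc)
    (ConnectedComponent.not_adj_of_ne hAB hb hd) (fun h => hxb h.symm)
    (fun h => hxc h.symm) fun h => hxs (h ▸ c.2)

end SimpleGraph

theorem stmt7_general [Fintype V] (G : SimpleGraph V) (hfree : P2P3Free G)
    (S : Finset V)
    (hS : ∀ x ∈ S, 2 ≤ {D : (G.induce ((↑S : Set V)ᶜ)).ConnectedComponent |
      ∃ v ∈ D.supp, G.Adj x ↑v}.ncard)
    (D1 D2 : (G.induce ((↑S : Set V)ᶜ)).ConnectedComponent) (hD12 : D1 ≠ D2)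
    (hc1 : G.IsClique (Subtype.val '' D1.supp)) (hc2 : G.IsClique (Subtype.val '' D2.supp))
    (hn1 : 2 ≤ (Subtype.val '' D1.supp).ncard) (hn2 : 2 ≤ (Subtype.val '' D2.supp).ncard) :
    ∀ x ∈ S,
      ((Subtype.val '' D1.supp).ncard - 1 ≤
          ((Subtype.val '' D1.supp) ∩ {v | G.Adj x v}).ncard ∧
        (Subtype.val '' D2.supp).ncard - 1 ≤
          ((Subtype.val '' D2.supp) ∩ {v | G.Adj x v}).ncard) ∨
      (∀ v ∈ D1.supp, G.Adj x ↑v) ∨ (∀ v ∈ D2.supp, G.Adj x ↑v) := by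
  intro x hx
  have hxs : x ∉ ((↑S : Set V)ᶜ) := fun h => h hx
  by_cases h1 : (Subtype.val '' D1.supp).ncard - 1 ≤
      ((Subtype.val '' D1.supp) ∩ {v | G.Adj x v}).ncard
  · by_cases h2 : (Subtype.val '' D2.supp).ncard - 1 ≤
        ((Subtype.val '' D2.supp) ∩ {v | G.Adj x v}).ncard
    · exact Or.inl ⟨h1, h2⟩
    obtain ⟨a, ha, b, hb, hab, hxa, hxb⟩ := ConnectedComponent.exists_not_adj_of_ncard_lt hc2 h2
    exact Or.inr <| Or.inl <|
      hfree.forall_adj_of_not_adj_edge hxs (hS x hx) hD12.symm ha hb hab hxa hxb hc1 hn1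
  obtain ⟨a, ha, b, hb, hab, hxa, hxb⟩ := ConnectedComponent.exists_not_adj_of_ncard_lt hc1 h1
  exact Or.inr <| Or.inr <|
    hfree.forall_adj_of_not_adj_edge hxs (hS x hx) hD12 ha hb hab hxa hxb hc2 hn2

theorem stmt7 [Fintype V] (G : SimpleGraph V) (hconn : G.Connected) (hfree : P2P3Free G)
    (S : Finset V) (hcut : 2 ≤ numComponents G S)
    (hS : ∀ x ∈ S, 2 ≤ {D : (G.induce ((↑S : Set V)ᶜ)).ConnectedComponent |
      ∃ v ∈ D.supp, G.Adj x ↑v}.ncard)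
    (D1 D2 : (G.induce ((↑S : Set V)ᶜ)).ConnectedComponent) (hD12 : D1 ≠ D2)
    (hc1 : G.IsClique (Subtype.val '' D1.supp)) (hc2 : G.IsClique (Subtype.val '' D2.supp))
    (hn1 : 2 ≤ (Subtype.val '' D1.supp).ncard) (hn2 : 2 ≤ (Subtype.val '' D2.supp).ncard) :
    ∀ x ∈ S,
      ((Subtype.val '' D1.supp).ncard - 1 ≤
          ((Subtype.val '' D1.supp) ∩ {v | G.Adj x v}).ncard ∧
        (Subtype.val '' D2.supp).ncard - 1 ≤
          ((Subtype.val '' D2.supp) ∩ {v | G.Adj x v}).ncard) ∨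
      (∀ v ∈ D1.supp, G.Adj x ↑v) ∨ (∀ v ∈ D2.supp, G.Adj x ↑v) :=
  stmt7_general G hfree S hS D1 D2 hD12 hc1 hc2 hn1 hn2
end

section
/- Let t ≥ 1 be a real number and G a t-tough graph on n vertices, and let C be a non-Hamiltonian cycle of G. If x ∈ V(G) - V(C) has more than n/(t+1) neighbors on C, then G has a cycle C' with vertex set V(C) ∪ {x}. -/
open SimpleGraph

variable {V : Type*}

/-!
Let `A` be the set of neighbours of `x` on `C` and write `u⁺` for the successor of `u` along `C`.
If `x` is adjacent to some `u⁺` with `u ∈ A`, then `x` can be inserted between `u` and `u⁺`.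
If `u⁺w⁺` is an edge for distinct `u, w ∈ A`, then `C - uu⁺ - ww⁺ + u⁺w⁺` is a path from `w`
to `u` through all of `V(C)`, which `x` closes into a cycle. Otherwise `I = {x} ∪ A⁺` is
independent with `|I| = |A| + 1 ≥ 2`, so deleting the complement of `I` leaves `|I|` components
and toughness gives `t |I| ≤ n - |I|`, that is `|A| + 1 ≤ n / (t + 1)`, against the degree bound.
-/

theorem SimpleGraph.card_connectedComponent_bot (W : Type*) :
    Nat.card (⊥ : SimpleGraph W).ConnectedComponent = Nat.card W :=
  (Nat.card_congr <| Equiv.ofBijective (⊥ : SimpleGraph W).connectedComponentMk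
    ⟨fun _ _ h => reachable_bot.mp (ConnectedComponent.eq.mp h), fun c => c.exists_rep⟩).symm

theorem numComponents_compl_of_isIndepSet [Fintype V] [DecidableEq V] {G : SimpleGraph V}
    {I : Finset V} (hI : G.IsIndepSet (I : Set V)) : numComponents G Iᶜ = I.card := by
  have hbot : G.induce (I : Set V) = ⊥ := by
    ext a b
    simp only [comap_adj, Function.Embedding.coe_subtype, bot_adj, iff_false]
    intro hab
    exact hI a.2 b.2 (fun h => hab.ne h) hab
  rw [numComponents, Finset.coe_compl, compl_compl, hbot, card_connectedComponent_bot,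
    Nat.card_coe_set_eq, Set.ncard_coe_finset]

theorem IsTough.add_one_mul_card_le [Fintype V] [DecidableEq V] {t : ℝ} {G : SimpleGraph V}
    (hG : IsTough t G) {I : Finset V} (hI : G.IsIndepSet (I : Set V)) (hcard : 2 ≤ I.card) :
    (t + 1) * I.card ≤ Fintype.card V := by
  have h := hG Iᶜ (by rwa [numComponents_compl_of_isIndepSet hI])
  rw [numComponents_compl_of_isIndepSet hI, Finset.card_compl, Nat.cast_sub I.card_le_univ] at h
  linarith

namespace SimpleGraph.Walk

variable {G : SimpleGraph V} {u v w x : V}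

theorem IsCycle.dart_eq_of_fst_eq {C : G.Walk v v} (hC : C.IsCycle) {d d' : G.Dart}
    (hd : d ∈ C.darts) (hd' : d' ∈ C.darts) (h : d.fst = d'.fst) : d = d' :=
  List.inj_on_of_nodup_map (C.map_fst_darts ▸ hC.nodup_dropLast_support) hd hd' h

theorem IsCycle.dart_eq_of_snd_eq {C : G.Walk v v} (hC : C.IsCycle) {d d' : G.Dart}
    (hd : d ∈ C.darts) (hd' : d' ∈ C.darts) (h : d.snd = d'.snd) : d = d' :=
  List.inj_on_of_nodup_map (C.map_snd_darts ▸ hC.support_nodup) hd hd' h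

theorem mem_support_tail_iff_of_not_nil {p : G.Walk v v} (hp : ¬ p.Nil) :
    u ∈ p.support.tail ↔ u ∈ p.support := by
  refine ⟨List.mem_of_mem_tail, fun h => ?_⟩
  rw [← cons_tail_support] at h
  rcases List.mem_cons.mp h with rfl | h
  · exact end_mem_tail_support hp
  · exact h

theorem IsPath.exists_isCycle_insert {a b : V} {P : G.Walk a b} (hP : P.IsPath)
    (hx : x ∉ P.support) (hab : a ≠ b) (hxa : G.Adj x a) (hxb : G.Adj x b) :
    ∃ C : G.Walk x x, C.IsCycle ∧ ∀ z, z ∈ C.support ↔ z = x ∨ z ∈ P.support := by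
  refine ⟨cons hxa (P.concat hxb.symm), ?_, fun z => ?_⟩
  · rw [cons_isCycle_iff, edges_concat, List.concat_eq_append, List.mem_append,
      List.mem_singleton, Sym2.eq_iff]
    refine ⟨hP.concat hx hxb.symm, ?_⟩
    rintro (h | ⟨rfl, -⟩ | ⟨-, rfl⟩)
    · exact hx (P.fst_mem_support_of_mem_edges h)
    · exact hx P.end_mem_support
    · exact hab rfl
  · simp only [support_cons, support_concat, List.mem_cons, List.mem_append]
    tauto

variable [DecidableEq V]

def cycleSucc (C : G.Walk v v) (u : V) : V :=
  if h : u ∈ C.support then (C.rotate u h).snd else u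

theorem cycleSucc_of_mem {C : G.Walk v v} (hu : u ∈ C.support) :
    C.cycleSucc u = (C.rotate u hu).snd :=
  dif_pos hu

namespace IsCycle

variable {C : G.Walk v v}

theorem exists_dart_cycleSucc (hC : C.IsCycle) (hu : u ∈ C.support) :
    ∃ d ∈ C.darts, d.fst = u ∧ d.snd = C.cycleSucc u :=
  ⟨_, (C.rotate_darts u hu).mem_iff.mp (firstDart_mem_darts (hC.rotate hu).not_nil), rfl,
    (cycleSucc_of_mem hu).symm⟩

theorem cycleSucc_fst (hC : C.IsCycle) {d : G.Dart} (hd : d ∈ C.darts) :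
    C.cycleSucc d.fst = d.snd := by
  obtain ⟨d', hd', hfst, hsnd⟩ :=
    hC.exists_dart_cycleSucc (C.dart_fst_mem_support_of_mem_darts hd)
  rw [← hsnd, hC.dart_eq_of_fst_eq hd' hd hfst]

theorem adj_cycleSucc (hC : C.IsCycle) (hu : u ∈ C.support) : G.Adj u (C.cycleSucc u) := by
  obtain ⟨d, -, rfl, hsnd⟩ := hC.exists_dart_cycleSucc hu
  exact hsnd ▸ d.adj

theorem cycleSucc_mem_support (hC : C.IsCycle) (hu : u ∈ C.support) :
    C.cycleSucc u ∈ C.support := by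
  obtain ⟨d, hd, -, hsnd⟩ := hC.exists_dart_cycleSucc hu
  exact hsnd ▸ C.dart_snd_mem_support_of_mem_darts hd

theorem injOn_cycleSucc (hC : C.IsCycle) : Set.InjOn C.cycleSucc {u | u ∈ C.support} := by
  intro u hu w hw h
  obtain ⟨d, hd, rfl, hsnd⟩ := hC.exists_dart_cycleSucc hu
  obtain ⟨e, he, rfl, hsnd'⟩ := hC.exists_dart_cycleSucc hw
  rw [hC.dart_eq_of_snd_eq hd he (hsnd.trans (h.trans hsnd'.symm))]

theorem exists_isPath_cycleSucc (hC : C.IsCycle) (hu : u ∈ C.support) :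
    ∃ P : G.Walk (C.cycleSucc u) u,
      P.IsPath ∧ P.darts ⊆ C.darts ∧ ∀ z, z ∈ P.support ↔ z ∈ C.support := by
  have hR := hC.rotate hu
  refine ⟨(C.rotate u hu).tail.copy (cycleSucc_of_mem hu).symm rfl,
    by simpa using hR.isPath_tail, fun d hd => ?_, fun z => ?_⟩
  · rw [darts_copy, darts_tail] at hd
    exact (C.rotate_darts u hu).mem_iff.mp (List.mem_of_mem_tail hd)
  · rw [support_copy, support_tail_of_not_nil _ hR.not_nil,
      mem_support_tail_iff_of_not_nil hR.not_nil, mem_support_rotate_iff]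

theorem exists_isPath_of_adj_cycleSucc (hC : C.IsCycle) (hu : u ∈ C.support)
    (hw : w ∈ C.support) (huw : u ≠ w) (hadj : G.Adj (C.cycleSucc u) (C.cycleSucc w)) :
    ∃ P : G.Walk w u, P.IsPath ∧ ∀ z, z ∈ P.support ↔ z ∈ C.support := by
  obtain ⟨P, hP, hdarts, hsupp⟩ := hC.exists_isPath_cycleSucc hu
  have hwP : w ∈ P.support := (hsupp w).2 hw
  have hnil : ¬ (P.dropUntil w hwP).Nil := not_nil_of_ne huw.symm
  have hsnd : (P.dropUntil w hwP).snd = C.cycleSucc w := (hC.cycleSucc_fst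
    (hdarts (P.darts_dropUntil_subset_darts hwP (firstDart_mem_darts hnil)))).symm
  let Q : G.Walk w u := (P.takeUntil w hwP).reverse.append
    (cons hadj ((P.dropUntil w hwP).tail.copy hsnd rfl))
  have hperm : Q.support.Perm P.support := by
    conv_rhs => rw [← P.take_spec hwP]
    simp only [Q, support_append, support_reverse, support_cons, List.tail_cons, support_copy,
      support_tail_of_not_nil _ hnil]
    exact List.reverse_perm _ |>.append_right _
  exact ⟨Q, IsPath.mk' (hperm.nodup_iff.2 hP.support_nodup),
    fun z => hperm.mem_iff.trans (hsupp z)⟩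

theorem exists_isCycle_of_adj_cycleSucc (hC : C.IsCycle) (hx : x ∉ C.support)
    (hu : u ∈ C.support) (hxu : G.Adj x u) (hxu' : G.Adj x (C.cycleSucc u)) :
    ∃ C' : G.Walk x x, C'.IsCycle ∧ ∀ z, z ∈ C'.support ↔ z = x ∨ z ∈ C.support := by
  obtain ⟨P, hP, -, hsupp⟩ := hC.exists_isPath_cycleSucc hu
  obtain ⟨C', hC', hsupp'⟩ :=
    hP.exists_isCycle_insert (mt (hsupp x).1 hx) (hC.adj_cycleSucc hu).ne' hxu' hxu
  exact ⟨C', hC', fun z => (hsupp' z).trans (or_congr_right (hsupp z))⟩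

theorem exists_isCycle_of_adj_cycleSucc_cycleSucc (hC : C.IsCycle) (hx : x ∉ C.support)
    (hu : u ∈ C.support) (hw : w ∈ C.support) (huw : u ≠ w) (hxu : G.Adj x u)
    (hxw : G.Adj x w) (hadj : G.Adj (C.cycleSucc u) (C.cycleSucc w)) :
    ∃ C' : G.Walk x x, C'.IsCycle ∧ ∀ z, z ∈ C'.support ↔ z = x ∨ z ∈ C.support := by
  obtain ⟨P, hP, hsupp⟩ := hC.exists_isPath_of_adj_cycleSucc hu hw huw hadj
  obtain ⟨C', hC', hsupp'⟩ := hP.exists_isCycle_insert (mt (hsupp x).1 hx) huw.symm hxw hxu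
  exact ⟨C', hC', fun z => (hsupp' z).trans (or_congr_right (hsupp z))⟩

theorem isIndepSet_insert_image_cycleSucc (hC : C.IsCycle) (hx : x ∉ C.support)
    (hno : ¬ ∃ C' : G.Walk x x,
      C'.IsCycle ∧ ∀ z, z ∈ C'.support ↔ z = x ∨ z ∈ C.support)
    {A : Set V} (hA : ∀ u ∈ A, u ∈ C.support ∧ G.Adj x u) :
    G.IsIndepSet (insert x (C.cycleSucc '' A)) := by
  have hx_succ : ∀ u ∈ A, ¬ G.Adj x (C.cycleSucc u) := fun u hu h =>
    hno (hC.exists_isCycle_of_adj_cycleSucc hx (hA u hu).1 (hA u hu).2 h)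
  refine Set.Pairwise.insert ?_ ?_
  · rintro _ ⟨u, hu, rfl⟩ _ ⟨w, hw, rfl⟩ hne h
    exact hno (hC.exists_isCycle_of_adj_cycleSucc_cycleSucc hx (hA u hu).1 (hA w hw).1
      (ne_of_apply_ne _ hne) (hA u hu).2 (hA w hw).2 h)
  · rintro _ ⟨u, hu, rfl⟩ -
    exact ⟨hx_succ u hu, fun h => hx_succ u hu h.symm⟩

end IsCycle

end SimpleGraph.Walk

theorem stmt8_general [Fintype V] (t : ℝ) (ht : 1 ≤ t) (G : SimpleGraph V)
    (htough : IsTough t G) (v : V) (C : G.Walk v v) (hC : C.IsCycle)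
    (x : V) (hx : x ∉ C.support)
    (hdeg : (Fintype.card V : ℝ) / (t + 1) <
      ({u | u ∈ C.support ∧ G.Adj x u}.ncard : ℝ)) :
    ∃ (w : V) (C' : G.Walk w w), C'.IsCycle ∧
      {u | u ∈ C'.support} = {u | u ∈ C.support} ∪ {x} := by
  classical
  set A : Set V := {u | u ∈ C.support ∧ G.Adj x u}
  by_contra hno
  set I : Set V := insert x (C.cycleSucc '' A)
  have hI : G.IsIndepSet I := hC.isIndepSet_insert_image_cycleSucc hx
    (fun ⟨C', hC', hsupp⟩ => hno ⟨x, C', hC', by ext z; simp [hsupp]⟩) fun _ => id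
  have hIcard : I.ncard = A.ncard + 1 := by
    have hinj : Set.InjOn C.cycleSucc A := hC.injOn_cycleSucc.mono fun _ => And.left
    rw [Set.ncard_insert_of_notMem, hinj.ncard_image]
    rintro ⟨u, hu, hux⟩
    exact hx (hux ▸ hC.cycleSucc_mem_support hu.1)
  have hA : 0 < A.ncard := by
    have : (0 : ℝ) ≤ Fintype.card V / (t + 1) := by positivity
    exact_mod_cast this.trans_lt hdeg
  have hbound := htough.add_one_mul_card_le (I := I.toFinset) (by simpa using hI)
    (by rw [← Set.ncard_eq_toFinset_card', hIcard]; omega)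
  rw [← Set.ncard_eq_toFinset_card', hIcard, Nat.cast_add_one] at hbound
  rw [div_lt_iff₀ (by linarith)] at hdeg
  linarith

theorem stmt8 [Fintype V] (t : ℝ) (ht : 1 ≤ t) (G : SimpleGraph V)
    (htough : IsTough t G) (v : V) (C : G.Walk v v) (hC : C.IsCycle)
    (hnonham : ∃ w, w ∉ C.support)
    (x : V) (hx : x ∉ C.support)
    (hdeg : (Fintype.card V : ℝ) / (t + 1) <
      ({u | u ∈ C.support ∧ G.Adj x u}.ncard : ℝ)) :
    ∃ (w : V) (C' : G.Walk w w), C'.IsCycle ∧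
      {u | u ∈ C'.support} = {u | u ∈ C.support} ∪ {x} :=
  stmt8_general t ht G htough v C hC x hx hdeg
end

section
/- Let G be a 15-tough (P2 ∪ P3)-free graph on n vertices, let C be a non-Hamiltonian cycle of G, and let P be an (x,z)-path contained in G - V(C). If both x and z have more than 4.5n/16 neighbors in V(C), then G has a cycle C' with vertex set V(C) ∪ V(P). -/
open SimpleGraph

variable {V : Type*}

/-!
Number `C` as `f : ZMod m → V` and let `A`, `B` be the indices of the cycle neighbours of `x`
and `z`. If no cycle has vertex set `V(C) ∪ V(P)`, rerouting `C` through `P` rules out three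
configurations: `i ∈ A` with `i + 1 ∈ B` (or the reverse); an edge `f (i + 1) f (j + 1)` with
`i ∈ A`, `j ∈ B`, `i ≠ j`; and, for an edge `f (U + 1) f (W + 1)` with `U, W ∈ A`, a common
neighbour `f (X + 1)` of `f U` and `f W` with `X ∈ B \ {U, W}`.

By `15`-toughness every independent set has at most `n / 16` vertices. With
`(P₂ ∪ P₃)`-freeness this shows that for `i ∈ A` with `i + 1 ∉ A`, all but `n / 16 + 1`
indices `j ∈ B` satisfy `f i ∼ f (j + 1)`. Hence `A` has no two consecutive indices, the set
`{f (i + 1) | i ∈ A}` of more than `n / 16` vertices contains an edge `f (U + 1) f (W + 1)`, and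
since `|B| > 4.5 n / 16` the indices good for `U` and for `W` overlap outside `{U, W}`, giving a
forbidden common neighbour.
-/

namespace SimpleGraph

variable {G : SimpleGraph V}

def HasCycleOn (G : SimpleGraph V) (s : Set V) : Prop :=
  ∃ (w : V) (c : G.Walk w w), c.IsCycle ∧ {u | u ∈ c.support} = s

lemma hasCycleOn_of_isChain {l : List V} (hl : 3 ≤ l.length) (hnd : l.Nodup)
    (hchain : l.IsChain G.Adj) (hclose : ∀ a ∈ l.getLast?, ∀ b ∈ l.head?, G.Adj a b) :
    G.HasCycleOn {u | u ∈ l} := by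
  have hne : l ≠ [] := List.ne_nil_of_length_pos (by omega)
  have hadj : G.Adj (l.getLast hne) (l.head hne) :=
    hclose _ (List.getLast?_eq_some_getLast hne) _ (List.head?_eq_some_head hne)
  refine ⟨_, .cons hadj (.ofSupport l hne hchain), ?_, ?_⟩
  · rw [Walk.isCycle_iff_isPath_tail_and_le_length]
    simp only [Walk.getVert_cons_succ, Walk.tail_cons, Walk.isPath_def, Walk.support_copy,
      Walk.support_ofSupport, hnd, Walk.length_cons, Walk.length_ofSupport, true_and]
    omega
  · ext u
    simp only [Walk.support_cons, Walk.support_ofSupport, List.mem_cons, Set.mem_ofPred_eq,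
      or_iff_right_iff_imp]
    rintro rfl
    exact List.getLast_mem hne

namespace Walk

lemma getVert_mod_length {v : V} (C : G.Walk v v) {n : ℕ} (hn : n ≤ C.length) :
    C.getVert (n % C.length) = C.getVert n := by
  rcases hn.lt_or_eq with hn | rfl
  · rw [Nat.mod_eq_of_lt hn]
  · simp

lemma IsCycle.exists_zmod_enum {v : V} {C : G.Walk v v} (hC : C.IsCycle) :
    ∃ (m : ℕ) (_ : NeZero m) (f : ZMod m → V), Function.Injective f ∧
      (∀ i, G.Adj (f i) (f (i + 1))) ∧ Set.range f = {u | u ∈ C.support} := by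
  have hlen := hC.three_le_length
  have : NeZero C.length := ⟨by omega⟩
  set f : ZMod C.length → V := fun i => C.getVert i.val
  have hf : ∀ n ≤ C.length, f n = C.getVert n := fun n hn => by
    simp only [f, ZMod.val_natCast, C.getVert_mod_length hn]
  refine ⟨C.length, this, f, fun i j hij => ?_, fun i => ?_, ?_⟩
  · have hi := ZMod.val_lt i
    have hj := ZMod.val_lt j
    exact ZMod.val_injective _ (hC.getVert_injOn' (by simp; omega) (by simp; omega) hij)
  · have hi := ZMod.val_lt i
    have h : f (i + 1) = C.getVert (i.val + 1) := by
      rw [← hf _ hi, Nat.cast_succ, ZMod.natCast_zmod_val]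
    rw [h]
    exact C.adj_getVert_succ hi
  · ext u
    simp only [Set.mem_range, Set.mem_ofPred_eq, mem_support_iff_exists_getVert]
    constructor
    · rintro ⟨i, rfl⟩
      exact ⟨i.val, rfl, (ZMod.val_lt i).le⟩
    · rintro ⟨n, rfl, hn⟩
      exact ⟨n, hf n hn⟩

end Walk

end SimpleGraph

section CycleArc

variable {m : ℕ} (f : ZMod m → V)

def cycleArc (s : ZMod m) (k : ℕ) : List V :=
  (List.range k).map fun t : ℕ => f (s + t)

@[simp]
lemma length_cycleArc (s : ZMod m) (k : ℕ) : (cycleArc f s k).length = k := by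
  simp [cycleArc]

lemma head?_cycleArc (s : ZMod m) {k : ℕ} (hk : 0 < k) : (cycleArc f s k).head? = some (f s) := by
  obtain ⟨k, rfl⟩ := Nat.exists_eq_add_of_lt hk
  simp [cycleArc, List.range_succ_eq_map]

lemma getLast?_cycleArc (s : ZMod m) {k : ℕ} (hk : 0 < k) :
    (cycleArc f s k).getLast? = some (f (s + k - 1)) := by
  obtain ⟨k, rfl⟩ := Nat.exists_eq_add_of_lt hk
  simp [cycleArc, List.range_succ, ← add_assoc]

lemma cycleArc_append (s : ZMod m) (k l : ℕ) :
    cycleArc f s k ++ cycleArc f (s + k) l = cycleArc f s (k + l) := by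
  simp [cycleArc, List.range_add, add_assoc]

lemma isChain_cycleArc {G : SimpleGraph V} (hadj : ∀ i, G.Adj (f i) (f (i + 1))) (s : ZMod m)
    (k : ℕ) : (cycleArc f s k).IsChain G.Adj := by
  rw [cycleArc, List.isChain_map]
  cases k with
  | zero => simp
  | succ k =>
    rw [List.isChain_range_succ]
    intro t _
    simpa [add_assoc] using hadj (s + t)

lemma nodup_cycleArc (hf : Function.Injective f) (s : ZMod m) {k : ℕ} (hk : k ≤ m) :
    (cycleArc f s k).Nodup := by
  refine List.nodup_range.map_on fun t ht t' ht' h => ?_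
  rw [List.mem_range] at ht ht'
  have := congrArg ZMod.val (add_left_cancel (hf h))
  rwa [ZMod.val_natCast_of_lt (by omega), ZMod.val_natCast_of_lt (by omega)] at this

lemma mem_cycleArc_length [NeZero m] (s : ZMod m) {u : V} :
    u ∈ cycleArc f s m ↔ u ∈ Set.range f := by
  simp only [cycleArc, List.mem_map, List.mem_range, Set.mem_range]
  refine ⟨fun ⟨t, _, h⟩ => ⟨_, h⟩, ?_⟩
  rintro ⟨i, rfl⟩
  exact ⟨(i - s).val, ZMod.val_lt _, by simp⟩

end CycleArc

section Rerouting

variable {G : SimpleGraph V} {m : ℕ} [NeZero m] {f : ZMod m → V}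
  (hf : Function.Injective f) (hadj : ∀ i, G.Adj (f i) (f (i + 1)))
  {x z : V} {P : G.Walk x z} (hP : P.IsPath) (hdisj : ∀ u ∈ P.support, u ∉ Set.range f)
include hf hadj hP hdisj

lemma hasCycleOn_of_perm_cycleArc {M : List V} {s : ZMod m} (hM : M.Perm (cycleArc f s m))
    (hchain : M.IsChain G.Adj) {a b : V} (ha : M.head? = some a) (hb : M.getLast? = some b)
    (hza : G.Adj z a) (hbx : G.Adj b x) :
    G.HasCycleOn (Set.range f ∪ {u | u ∈ P.support}) := by
  have hm : 1 < m := by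
    by_contra! h
    obtain rfl : m = 1 := by have := NeZero.ne m; omega
    simpa [Subsingleton.elim (0 + 1 : ZMod 1) 0] using hadj 0
  have hmemM : ∀ u, u ∈ M ↔ u ∈ Set.range f :=
    fun u => hM.mem_iff.trans (mem_cycleArc_length f s)
  have hlen : 3 ≤ (P.support ++ M).length := by
    have := P.support.length_pos_of_ne_nil P.support_ne_nil
    simp only [List.length_append, Walk.length_support, hM.length_eq, length_cycleArc]
    omega
  have hnd : (P.support ++ M).Nodup := by
    refine List.nodup_append.mpr
      ⟨hP.support_nodup, hM.nodup_iff.mpr (nodup_cycleArc f hf s le_rfl), ?_⟩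
    rintro u hu _ hv rfl
    exact hdisj u hu ((hmemM u).mp hv)
  have hchain' : (P.support ++ M).IsChain G.Adj := by
    refine List.isChain_append.mpr ⟨P.isChain_adj_support, hchain, ?_⟩
    simp [List.getLast?_eq_some_getLast P.support_ne_nil, ha, hza]
  have hclose :
      ∀ c ∈ (P.support ++ M).getLast?, ∀ d ∈ (P.support ++ M).head?, G.Adj c d := by
    simp [List.head?_eq_some_head P.support_ne_nil, hb, hbx]
  convert hasCycleOn_of_isChain hlen hnd hchain' hclose using 1
  ext u
  simp [hmemM, or_comm]

lemma hasCycleOn_of_adj_of_adj_succ {U : ZMod m} (hx : G.Adj x (f U))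
    (hz : G.Adj z (f (U + 1))) : G.HasCycleOn (Set.range f ∪ {u | u ∈ P.support}) := by
  have hm : 0 < m := Nat.pos_of_neZero m
  refine hasCycleOn_of_perm_cycleArc hf hadj hP hdisj (List.Perm.refl _)
    (isChain_cycleArc f hadj _ _) (head?_cycleArc f _ hm) (getLast?_cycleArc f _ hm) hz ?_
  simpa using hx.symm

-- `x ⋯ z`, back along `C` from `f (U + b)` to `f (U + 1)`, across to `f (U + b + 1)`,
-- and on to `f U`.
lemma hasCycleOn_of_adj_succ_adj_succ {U : ZMod m} {b : ℕ} (hb : 0 < b) (hbm : b < m)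
    (hx : G.Adj x (f U)) (hz : G.Adj z (f (U + b))) (hsucc : G.Adj (f (U + 1)) (f (U + b + 1))) :
    G.HasCycleOn (Set.range f ∪ {u | u ∈ P.support}) := by
  set A₁ := cycleArc f (U + 1) b
  set A₂ := cycleArc f (U + 1 + b) (m - b)
  have hperm : (A₁.reverse ++ A₂).Perm (cycleArc f (U + 1) m) := by
    refine (A₁.reverse_perm.append_right A₂).trans ?_
    rw [cycleArc_append, Nat.add_sub_cancel' hbm.le]
  have hchain : (A₁.reverse ++ A₂).IsChain G.Adj := by
    refine List.isChain_append.mpr ⟨List.isChain_reverse.mpr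
      ((isChain_cycleArc f hadj _ _).imp fun _ _ h => h.symm), isChain_cycleArc f hadj _ _, ?_⟩
    simp only [A₁, A₂, List.getLast?_reverse, head?_cycleArc f _ hb,
      head?_cycleArc f _ (Nat.sub_pos_of_lt hbm), Option.mem_def, Option.some.injEq, forall_eq']
    rwa [add_right_comm]
  refine hasCycleOn_of_perm_cycleArc hf hadj hP hdisj hperm hchain ?_ ?_ hz hx.symm
  · simp only [A₁, List.head?_append, List.head?_reverse, getLast?_cycleArc f _ hb,
      Option.some_or, Option.some.injEq]
    ring_nf
  · simp [A₂, getLast?_cycleArc f _ (Nat.sub_pos_of_lt hbm), Nat.cast_sub hbm.le]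

-- `x ⋯ z`, back from `f (U + b)` to `f (U + a + 1)`, across to `f (U + 1)`, on to `f (U + a)`,
-- across to `f (U + b + 1)`, and on to `f U`.
lemma hasCycleOn_of_adj_succ_adj_succ_of_adj_succ {U : ZMod m} {a b : ℕ} (ha : 0 < a)
    (hab : a < b) (hbm : b < m) (hx : G.Adj x (f U)) (hz : G.Adj z (f (U + b)))
    (hsucc : G.Adj (f (U + 1)) (f (U + a + 1))) (hcross : G.Adj (f (U + a)) (f (U + b + 1))) :
    G.HasCycleOn (Set.range f ∪ {u | u ∈ P.support}) := by
  set A₁ := cycleArc f (U + 1) a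
  set A₂ := cycleArc f (U + 1 + a) (b - a)
  set A₃ := cycleArc f (U + 1 + b) (m - b)
  have hperm : (A₂.reverse ++ (A₁ ++ A₃)).Perm (cycleArc f (U + 1) m) := by
    refine (A₂.reverse_perm.append_right _).trans (List.perm_append_comm_assoc _ _ _) |>.trans ?_
    rw [← List.append_assoc, cycleArc_append, Nat.add_sub_cancel' hab.le, cycleArc_append,
      Nat.add_sub_cancel' hbm.le]
  have hchain : (A₂.reverse ++ (A₁ ++ A₃)).IsChain G.Adj := by
    refine List.isChain_append.mpr ⟨List.isChain_reverse.mpr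
      ((isChain_cycleArc f hadj _ _).imp fun _ _ h => h.symm),
      List.isChain_append.mpr
        ⟨isChain_cycleArc f hadj _ _, isChain_cycleArc f hadj _ _, ?_⟩, ?_⟩
    · simp only [A₁, A₃, getLast?_cycleArc f _ ha, head?_cycleArc f _ (Nat.sub_pos_of_lt hbm),
        Option.mem_def, Option.some.injEq, forall_eq']
      convert hcross using 2 <;> ring
    · simp only [A₁, A₂, List.getLast?_reverse, List.head?_append, head?_cycleArc f _ ha,
        head?_cycleArc f _ (Nat.sub_pos_of_lt hab), Option.some_or, Option.mem_def,
        Option.some.injEq, forall_eq']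
      rw [add_right_comm]
      exact hsucc.symm
  refine hasCycleOn_of_perm_cycleArc hf hadj hP hdisj hperm hchain ?_ ?_ hz hx.symm
  · simp only [A₂, List.head?_append, List.head?_reverse,
      getLast?_cycleArc f _ (Nat.sub_pos_of_lt hab), Nat.cast_sub hab.le, add_add_sub_cancel,
      Option.some_or, Option.some.injEq]
    ring_nf
  · simp [A₁, A₃, getLast?_cycleArc f _ (Nat.sub_pos_of_lt hbm), Nat.cast_sub hbm.le]

end Rerouting

open Finset

section Toughness

variable {G : SimpleGraph V} [Fintype V]

lemma IsTough.mul_card_le_of_isIndepSet {t : ℝ} (htough : IsTough t G) (ht : 0 ≤ t)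
    {I : Finset V} (hI : G.IsIndepSet ↑I) (hcard : 2 ≤ #I) :
    (t + 1) * #I ≤ Fintype.card V := by
  classical
  set S := I.biUnion fun a => G.neighborFinset a
  have hIS : ∀ a ∈ I, a ∉ S := by
    intro a ha hS
    obtain ⟨b, hb, hba⟩ := mem_biUnion.mp hS
    exact hI hb ha (G.ne_of_adj ((G.mem_neighborFinset b a).mp hba))
      ((G.mem_neighborFinset b a).mp hba)
  have hcompl : ∀ a ∈ I, a ∈ (↑S : Set V)ᶜ := fun a ha => hIS a ha
  let φ : I → (G.induce (↑S : Set V)ᶜ).ConnectedComponent :=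
    fun a => (G.induce _).connectedComponentMk ⟨a, hcompl a a.2⟩
  have hφ : Function.Injective φ := by
    intro a b hab
    by_contra hne
    obtain ⟨w⟩ := ConnectedComponent.exact hab
    have h := w.adj_snd (w.not_nil_of_ne fun h => hne (Subtype.ext (Subtype.mk.inj h)))
    exact w.snd.2 (mem_biUnion.mpr ⟨a, a.2, (G.mem_neighborFinset _ _).mpr h⟩)
  have hc : #I ≤ numComponents G S := by
    simpa [numComponents] using Nat.card_le_card_of_injective φ hφ
  have hSI : #S + #I ≤ Fintype.card V := by
    rw [← card_union_of_disjoint (disjoint_right.mpr hIS)]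
    exact card_le_univ _
  have := htough S (hcard.trans hc)
  have hc' : (#I : ℝ) ≤ numComponents G S := by exact_mod_cast hc
  have hSI' : (#S : ℝ) + #I ≤ Fintype.card V := by exact_mod_cast hSI
  nlinarith

end Toughness

lemma P2P3Free.not_adj_of_anticomplete {G : SimpleGraph V} (hfree : P2P3Free G)
    {p q a b c : V} (hac : a ≠ c) (hab : G.Adj a b) (hbc : G.Adj b c) (hnac : ¬ G.Adj a c)
    (hp : ∀ u ∈ [a, b, c], ¬ G.Adj p u) (hq : ∀ u ∈ [a, b, c], ¬ G.Adj q u) :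
    ¬ G.Adj p q := by
  intro hpq
  simp only [List.mem_cons, List.not_mem_nil, or_false, forall_eq_or_imp, forall_eq] at hp hq
  have ne_of : ∀ {r s u : V}, G.Adj r s → ¬ G.Adj s u → r ≠ u :=
    fun h h' e => h' (e ▸ h.symm)
  have := ne_of hpq hq.1; have := ne_of hpq hq.2.1; have := ne_of hpq hq.2.2
  have := ne_of hpq.symm hp.1; have := ne_of hpq.symm hp.2.1; have := ne_of hpq.symm hp.2.2
  refine hfree ⟨⟨![p, q, a, b, c], fun i j hij => ?_⟩, ?_⟩
  · have := hpq.ne; have := hab.ne; have := hbc.ne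
    fin_cases i <;> fin_cases j <;> simp at hij ⊢ <;>
      first | exact absurd hij ‹_› | exact absurd hij.symm ‹_›
  · show ∀ i j, P2P3.Adj i j ↔ G.Adj (![p, q, a, b, c] i) (![p, q, a, b, c] j)
    intro i j
    fin_cases i <;> fin_cases j <;> simp_all [P2P3, G.adj_comm]

namespace ZMod

variable {m : ℕ} [NeZero m]

lemma exists_eq_add_natCast_of_ne {i j : ZMod m} (hij : i ≠ j) :
    ∃ b : ℕ, 0 < b ∧ b < m ∧ j = i + b :=
  ⟨(j - i).val, val_pos.mpr (sub_ne_zero.mpr hij.symm), val_lt _, by simp⟩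

lemma exists_cyclic_order {U W X : ZMod m} (hWU : W ≠ U) (hXU : X ≠ U) (hXW : X ≠ W) :
    (∃ a b : ℕ, 0 < a ∧ a < b ∧ b < m ∧ W = U + a ∧ X = U + b) ∨
      (∃ a b : ℕ, 0 < a ∧ a < b ∧ b < m ∧ U = W + a ∧ X = W + b) := by
  obtain ⟨a, ha, ham, rfl⟩ := exists_eq_add_natCast_of_ne hWU.symm
  obtain ⟨b, hb, hbm, rfl⟩ := exists_eq_add_natCast_of_ne hXU.symm
  have hab : a ≠ b := fun h => hXW (by rw [h])
  rcases hab.lt_or_gt with hab | hba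
  · exact .inl ⟨a, b, ha, hab, hbm, rfl, rfl⟩
  · refine .inr ⟨m - a, m - a + b, by omega, by omega, by omega, ?_, ?_⟩ <;>
      simp [Nat.cast_sub ham.le]

lemma exists_and_not_add_one {p : ZMod m → Prop} (hp : ∃ i, p i) (hnp : ∃ j, ¬ p j) :
    ∃ i, p i ∧ ¬ p (i + 1) := by
  by_contra! hstep
  obtain ⟨i, hi⟩ := hp
  obtain ⟨j, hj⟩ := hnp
  have hall : ∀ k : ℕ, p (i + k) := fun k => by
    induction k with
    | zero => simpa using hi
    | succ k ih => simpa [add_assoc] using hstep _ ih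
  exact hj (by simpa using hall (j - i).val)

end ZMod

section Obstructions

variable {G : SimpleGraph V} {m : ℕ} [NeZero m] {f : ZMod m → V}
  (hf : Function.Injective f) (hadj : ∀ i, G.Adj (f i) (f (i + 1)))
  {x z : V} {P : G.Walk x z} (hP : P.IsPath) (hdisj : ∀ u ∈ P.support, u ∉ Set.range f)
  (hno : ¬ G.HasCycleOn (Set.range f ∪ {u | u ∈ P.support}))
include hf hadj hP hdisj hno

lemma not_adj_end_succ_of_adj_start {i : ZMod m} (hx : G.Adj x (f i)) : ¬ G.Adj z (f (i + 1)) :=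
  fun hz => hno (hasCycleOn_of_adj_of_adj_succ hf hadj hP hdisj hx hz)

lemma not_adj_start_succ_of_adj_end {i : ZMod m} (hz : G.Adj z (f i)) : ¬ G.Adj x (f (i + 1)) :=
  not_adj_end_succ_of_adj_start hf hadj hP.reverse (by simpa using hdisj) (by simpa using hno) hz

lemma not_adj_succ_succ {i j : ZMod m} (hx : G.Adj x (f i)) (hz : G.Adj z (f j)) (hij : i ≠ j) :
    ¬ G.Adj (f (i + 1)) (f (j + 1)) := by
  obtain ⟨b, hb, hbm, rfl⟩ := ZMod.exists_eq_add_natCast_of_ne hij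
  exact fun h => hno (hasCycleOn_of_adj_succ_adj_succ hf hadj hP hdisj hb hbm hx hz h)

lemma not_common_adj_succ {U W X : ZMod m} (hU : G.Adj x (f U)) (hW : G.Adj x (f W))
    (hX : G.Adj z (f X)) (hWU : W ≠ U) (hXU : X ≠ U) (hXW : X ≠ W)
    (hUW : G.Adj (f (U + 1)) (f (W + 1))) :
    ¬ (G.Adj (f U) (f (X + 1)) ∧ G.Adj (f W) (f (X + 1))) := by
  rintro ⟨hUX, hWX⟩
  rcases ZMod.exists_cyclic_order hWU hXU hXW with
    ⟨a, b, ha, hab, hbm, rfl, rfl⟩ | ⟨a, b, ha, hab, hbm, rfl, rfl⟩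
  · exact hno (hasCycleOn_of_adj_succ_adj_succ_of_adj_succ hf hadj hP hdisj ha hab hbm hU hX
      hUW hWX)
  · exact hno (hasCycleOn_of_adj_succ_adj_succ_of_adj_succ hf hadj hP hdisj ha hab hbm hW hX
      hUW.symm hUX)

end Obstructions

section Counting

variable {G : SimpleGraph V} [Fintype V] [DecidableRel G.Adj] {m : ℕ} [NeZero m]
  {f : ZMod m → V} (hf : Function.Injective f) (hadj : ∀ i, G.Adj (f i) (f (i + 1)))
  {x z : V} {P : G.Walk x z} (hP : P.IsPath) (hdisj : ∀ u ∈ P.support, u ∉ Set.range f)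
  (hno : ¬ G.HasCycleOn (Set.range f ∪ {u | u ∈ P.support}))
  (hα : ∀ I : Finset V, G.IsIndepSet ↑I → 2 ≤ #I → 16 * #I ≤ Fintype.card V)
  (hB : 9 * Fintype.card V < 32 * #{j | G.Adj z (f j)})
include hf hadj hP hdisj hno hα hB

lemma thirtytwo_le_card : 32 ≤ Fintype.card V := by
  classical
  obtain ⟨j, hj⟩ : ({j | G.Adj z (f j)} : Finset _).Nonempty := card_pos.mp (by omega)
  have hx : x ≠ f (j + 1) := fun h => hdisj x P.start_mem_support ⟨_, h.symm⟩
  have hI : G.IsIndepSet ↑({x, f (j + 1)} : Finset V) := by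
    rw [coe_pair, isIndepSet_iff, Set.pairwise_pair]
    have := not_adj_start_succ_of_adj_end hf hadj hP hdisj hno (mem_filter.mp hj).2
    exact fun _ => ⟨this, fun h => this h.symm⟩
  simpa [card_pair hx] using hα _ hI (by rw [card_pair hx])

lemma sixteen_mul_card_le_of_isIndepSet {I : Finset V} (hI : G.IsIndepSet ↑I) :
    16 * #I ≤ Fintype.card V := by
  by_cases h : 2 ≤ #I
  · exact hα I hI h
  · have := thirtytwo_le_card hf hadj hP hdisj hno hα hB
    omega

lemma card_le_card_filter_adj_succ (hfree : P2P3Free G) {i : ZMod m} (hi : G.Adj x (f i))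
    (hi' : ¬ G.Adj x (f (i + 1))) :
    16 * #{j | G.Adj z (f j)} ≤
      16 * #{j | G.Adj z (f j) ∧ G.Adj (f i) (f (j + 1))} + Fintype.card V + 16 := by
  classical
  set Bad : Finset (ZMod m) := {j | G.Adj z (f j) ∧ ¬ G.Adj (f i) (f (j + 1))}
  have hsplit : #{j | G.Adj z (f j)} =
      #{j | G.Adj z (f j) ∧ G.Adj (f i) (f (j + 1))} + #Bad := by
    rw [← card_filter_add_card_filter_not (s := {j | G.Adj z (f j)})
      (fun j => G.Adj (f i) (f (j + 1)))]
    simp [Bad, filter_filter]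
  have hfar : ∀ j, G.Adj z (f j) → ¬ G.Adj (f i) (f (j + 1)) → j ≠ i →
      ∀ u ∈ [x, f i, f (i + 1)], ¬ G.Adj (f (j + 1)) u := by
    intro j hj hj' hji
    simp only [List.mem_cons, List.not_mem_nil, or_false, forall_eq_or_imp, forall_eq]
    exact ⟨fun h => not_adj_start_succ_of_adj_end hf hadj hP hdisj hno hj h.symm,
      fun h => hj' h.symm, fun h => not_adj_succ_succ hf hadj hP hdisj hno hi hj hji.symm h.symm⟩
  -- An edge here and the induced path `x, f i, f (i + 1)` would form an induced `P₂ ∪ P₃`.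
  have hI : G.IsIndepSet ↑((Bad.erase i).image fun j => f (j + 1)) := by
    rintro _ hu _ hv -
    simp only [coe_image, Set.mem_image, mem_coe, mem_erase] at hu hv
    obtain ⟨j, ⟨hji, hj⟩, rfl⟩ := hu
    obtain ⟨k, ⟨hki, hk⟩, rfl⟩ := hv
    simp only [Bad, mem_filter, mem_univ, true_and] at hj hk
    exact hfree.not_adj_of_anticomplete (fun h => hdisj x P.start_mem_support ⟨_, h.symm⟩) hi
      (hadj i) hi' (hfar j hj.1 hj.2 hji) (hfar k hk.1 hk.2 hki)
  have hcard := sixteen_mul_card_le_of_isIndepSet hf hadj hP hdisj hno hα hB hI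
  rw [card_image_of_injective _ fun _ _ h => add_right_cancel (hf h)] at hcard
  have := pred_card_le_card_erase (s := Bad) (a := i)
  omega

lemma not_adj_start_succ_of_adj_start (hfree : P2P3Free G) {i : ZMod m} (hx : G.Adj x (f i)) :
    ¬ G.Adj x (f (i + 1)) := by
  intro hx'
  obtain ⟨j, hj⟩ : ({j | G.Adj z (f j)} : Finset _).Nonempty := card_pos.mp (by omega)
  obtain ⟨k, ⟨hk, hk'⟩, hend⟩ := ZMod.exists_and_not_add_one
    (p := fun k => G.Adj x (f k) ∧ G.Adj x (f (k + 1))) ⟨i, hx, hx'⟩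
    ⟨j, fun h => not_adj_start_succ_of_adj_end hf hadj hP hdisj hno (mem_filter.mp hj).2 h.2⟩
  have hgood := card_le_card_filter_adj_succ hf hadj hP hdisj hno hα hB hfree hk'
    fun h => hend ⟨hk', h⟩
  have hsub : ({j | G.Adj z (f j) ∧ G.Adj (f (k + 1)) (f (j + 1))} : Finset _) ⊆ {k} := by
    intro j hj
    simp only [mem_filter, mem_univ, true_and] at hj
    rw [mem_singleton]
    by_contra hjk
    exact not_adj_succ_succ hf hadj hP hdisj hno hk hj.1 (Ne.symm hjk) hj.2
  have := card_le_card hsub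
  have := thirtytwo_le_card hf hadj hP hdisj hno hα hB
  simp only [card_singleton] at *
  omega

lemma exists_adj_succ_succ_of_adj_start (hA : 9 * Fintype.card V < 32 * #{i | G.Adj x (f i)}) :
    ∃ U W, G.Adj x (f U) ∧ G.Adj x (f W) ∧ U ≠ W ∧ G.Adj (f (U + 1)) (f (W + 1)) := by
  classical
  by_contra! h
  have hI : G.IsIndepSet ↑(({i | G.Adj x (f i)} : Finset _).image fun i => f (i + 1)) := by
    rintro _ hu _ hv hne
    simp only [coe_image, Set.mem_image, coe_filter, mem_univ, true_and] at hu hv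
    obtain ⟨U, hU, rfl⟩ := hu
    obtain ⟨W, hW, rfl⟩ := hv
    exact h U W hU hW fun h => hne (by rw [h])
  have := sixteen_mul_card_le_of_isIndepSet hf hadj hP hdisj hno hα hB hI
  rw [card_image_of_injective _ fun _ _ h => add_right_cancel (hf h)] at this
  omega

lemma false_of_not_hasCycleOn (hfree : P2P3Free G)
    (hA : 9 * Fintype.card V < 32 * #{i | G.Adj x (f i)}) : False := by
  obtain ⟨U, W, hU, hW, hUW, hsucc⟩ :=
    exists_adj_succ_succ_of_adj_start hf hadj hP hdisj hno hα hB hA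
  have hgU := card_le_card_filter_adj_succ hf hadj hP hdisj hno hα hB hfree hU
    (not_adj_start_succ_of_adj_start hf hadj hP hdisj hno hα hB hfree hU)
  have hgW := card_le_card_filter_adj_succ hf hadj hP hdisj hno hα hB hfree hW
    (not_adj_start_succ_of_adj_start hf hadj hP hdisj hno hα hB hfree hW)
  set GU : Finset (ZMod m) := {j | G.Adj z (f j) ∧ G.Adj (f U) (f (j + 1))}
  set GW : Finset (ZMod m) := {j | G.Adj z (f j) ∧ G.Adj (f W) (f (j + 1))}
  have hunion : #(GU ∪ GW) ≤ #{j | G.Adj z (f j)} := card_le_card fun j hj => by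
    simp only [GU, GW, mem_union, mem_filter, mem_univ, true_and] at hj ⊢
    tauto
  have := card_union_add_card_inter GU GW
  have := thirtytwo_le_card hf hadj hP hdisj hno hα hB
  obtain ⟨X, hX, hXUW⟩ := exists_mem_notMem_of_card_lt_card (s := {U, W}) (t := GU ∩ GW)
    (by have := card_le_two (a := U) (b := W); omega)
  simp only [GU, GW, mem_inter, mem_filter, mem_univ, true_and, mem_insert, mem_singleton,
    not_or] at hX hXUW
  exact not_common_adj_succ hf hadj hP hdisj hno hU hW hX.1.1 hUW.symm hXUW.1 hXUW.2 hsucc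
    ⟨hX.1.2, hX.2.2⟩

end Counting

lemma ncard_setOf_mem_range_and {α : Type*} [Fintype α] {f : α → V} (hf : Function.Injective f)
    (p : V → Prop) [DecidablePred p] :
    {u | u ∈ Set.range f ∧ p u}.ncard = #{i | p (f i)} := by
  have : {u | u ∈ Set.range f ∧ p u} = f '' ↑({i | p (f i)} : Finset α) := by
    ext u
    simp only [Set.mem_ofPred_eq, Set.mem_range, coe_filter, mem_univ, true_and, Set.mem_image]
    constructor
    · rintro ⟨⟨i, rfl⟩, h⟩
      exact ⟨i, h, rfl⟩
    · rintro ⟨i, h, rfl⟩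
      exact ⟨⟨i, rfl⟩, h⟩
  rw [this, Set.ncard_image_of_injective _ hf, Set.ncard_coe_finset]

theorem stmt9_general [Fintype V] (G : SimpleGraph V)
    (htough : IsTough 15 G) (hfree : P2P3Free G)
    (v : V) (C : G.Walk v v) (hC : C.IsCycle)
    (x z : V) (P : G.Walk x z) (hP : P.IsPath)
    (hdisj : ∀ u ∈ P.support, u ∉ C.support)
    (hdegx : 4.5 * (Fintype.card V : ℝ) / 16 <
      ({u | u ∈ C.support ∧ G.Adj x u}.ncard : ℝ))
    (hdegz : 4.5 * (Fintype.card V : ℝ) / 16 <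
      ({u | u ∈ C.support ∧ G.Adj z u}.ncard : ℝ)) :
    ∃ (w : V) (C' : G.Walk w w), C'.IsCycle ∧
      {u | u ∈ C'.support} = {u | u ∈ C.support} ∪ {u | u ∈ P.support} := by
  classical
  obtain ⟨m, _, f, hf, hadj, hrange⟩ := hC.exists_zmod_enum
  have hcard : ∀ y, {u | u ∈ C.support ∧ G.Adj y u}.ncard = #{i | G.Adj y (f i)} := by
    intro y
    rw [← ncard_setOf_mem_range_and hf (G.Adj y), hrange]
    rfl
  have hA : 9 * Fintype.card V < 32 * #{i | G.Adj x (f i)} := by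
    rw [hcard] at hdegx
    exact_mod_cast (by linarith : (9 * Fintype.card V : ℝ) < 32 * #{i | G.Adj x (f i)})
  have hB : 9 * Fintype.card V < 32 * #{i | G.Adj z (f i)} := by
    rw [hcard] at hdegz
    exact_mod_cast (by linarith : (9 * Fintype.card V : ℝ) < 32 * #{i | G.Adj z (f i)})
  have hα : ∀ I : Finset V, G.IsIndepSet ↑I → 2 ≤ #I → 16 * #I ≤ Fintype.card V :=
    fun I hI h2 => by
      have := htough.mul_card_le_of_isIndepSet (by norm_num) hI h2
      exact_mod_cast (by linarith : (16 * #I : ℝ) ≤ Fintype.card V)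
  have hdisj' : ∀ u ∈ P.support, u ∉ Set.range f := by rwa [hrange]
  rw [← hrange]
  by_contra hno
  exact false_of_not_hasCycleOn hf hadj hP hdisj' hno hα hB hfree hA

theorem stmt9 [Fintype V] (G : SimpleGraph V)
    (htough : IsTough 15 G) (hfree : P2P3Free G)
    (v : V) (C : G.Walk v v) (hC : C.IsCycle) (hnonham : ∃ w, w ∉ C.support)
    (x z : V) (P : G.Walk x z) (hP : P.IsPath)
    (hdisj : ∀ u ∈ P.support, u ∉ C.support)
    (hdegx : 4.5 * (Fintype.card V : ℝ) / 16 <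
      ({u | u ∈ C.support ∧ G.Adj x u}.ncard : ℝ))
    (hdegz : 4.5 * (Fintype.card V : ℝ) / 16 <
      ({u | u ∈ C.support ∧ G.Adj z u}.ncard : ℝ)) :
    ∃ (w : V) (C' : G.Walk w w), C'.IsCycle ∧
      {u | u ∈ C'.support} = {u | u ∈ C.support} ∪ {u | u ∈ P.support} :=
  stmt9_general G htough hfree v C hC x z P hP hdisj hdegx hdegz
end

section
/- Let G be an n-vertex graph and C a cycle in G with a fixed orientation, and let x ∈ V(G) - V(C). If there exist neighbors u, w of x on C such that the successors u⁺ and w⁺ on C are adjacent in G, then G has a cycle with vertex set V(C) ∪ {x}. -/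
open SimpleGraph

variable {V : Type*}

/-!
Write the cycle as `c₀ c₁ … c_{L-1} c₀` with `u = cᵢ`, `w = cⱼ`, `i < j`. Deleting the edge
`cᵢcᵢ₊₁` leaves a path from `cᵢ₊₁` to `cᵢ` through all of `C`. In it, `cⱼ` is followed by
`cⱼ₊₁`, so reversing the initial segment `cᵢ₊₁ … cⱼ` and reattaching it through the edge
`cᵢ₊₁cⱼ₊₁` (a Pósa rotation) gives a path from `cⱼ` to `cᵢ` on the same vertices. Both ends are
neighbours of `x`, which closes it to the required cycle.
-/

open scoped List

namespace SimpleGraph.Walk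

variable {G : SimpleGraph V}

def posaRotate {a b : V} (p : G.Walk a b) (k : ℕ) (h : G.Adj a (p.getVert (k + 1))) :
    G.Walk (p.getVert k) b :=
  (p.take k).reverse.append (cons h (p.drop (k + 1)))

lemma support_posaRotate_perm {a b : V} (p : G.Walk a b) {k : ℕ}
    (h : G.Adj a (p.getVert (k + 1))) (hk : k < p.length) :
    (p.posaRotate k h).support ~ p.support := by
  rw [posaRotate, support_append, support_reverse, support_take, support_cons, List.tail_cons,
    drop_support_eq_support_drop_min, min_eq_left hk]
  exact (List.reverse_perm _).append_right _ |>.trans (List.take_append_drop _ _ ▸ .rfl)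

lemma IsPath.posaRotate {a b : V} {p : G.Walk a b} (hp : p.IsPath) {k : ℕ}
    (h : G.Adj a (p.getVert (k + 1))) (hk : k < p.length) : (p.posaRotate k h).IsPath :=
  (isPath_def _).mpr <| (p.support_posaRotate_perm h hk).nodup_iff.mpr hp.support_nodup

def openAfter {v : V} (c : G.Walk v v) (i : ℕ) : G.Walk (c.getVert (i + 1)) (c.getVert i) :=
  (c.drop (i + 1)).append (c.take i)

lemma support_openAfter_perm {v : V} (c : G.Walk v v) {i : ℕ} (hi : i < c.length) :
    (c.openAfter i).support ~ c.support.tail := by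
  obtain ⟨t, ht⟩ : ∃ t, c.support = v :: t := ⟨_, (c.cons_tail_support ..).symm⟩
  rw [openAfter, support_append, drop_support_eq_support_drop_min, support_take, ht,
    min_eq_left hi, List.drop_succ_cons, List.take_succ_cons, List.tail_cons, List.tail_cons]
  exact List.perm_append_comm.trans (List.take_append_drop _ _ ▸ .rfl)

lemma IsCycle.isPath_openAfter {v : V} {c : G.Walk v v} (hc : c.IsCycle) {i : ℕ}
    (hi : i < c.length) : (c.openAfter i).IsPath :=
  (isPath_def _).mpr <| (c.support_openAfter_perm hi).nodup_iff.mpr hc.support_nodup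

lemma getVert_openAfter {v : V} (c : G.Walk v v) {i m : ℕ} (hm : i + 1 + m ≤ c.length) :
    (c.openAfter i).getVert m = c.getVert (i + 1 + m) := by
  rw [openAfter, getVert_append', drop_length, if_pos (by omega), drop_getVert]

lemma length_openAfter {v : V} (c : G.Walk v v) {i : ℕ} (hi : i < c.length) :
    (c.openAfter i).length = c.length - 1 := by
  rw [openAfter, length_append, drop_length, take_length]
  omega

lemma IsPath.isCycle_cons_concat {u w x : V} {q : G.Walk u w} (hq : q.IsPath)
    (hx : x ∉ q.support) (hne : u ≠ w) (hxu : G.Adj x u) (hwx : G.Adj w x) :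
    (cons hxu (q.concat hwx)).IsCycle := by
  refine (cons_isCycle_iff _ _).mpr ⟨hq.concat hx hwx, fun he => ?_⟩
  rw [edges_concat, List.concat_eq_append, List.mem_append, List.mem_singleton] at he
  rcases he with he | he
  · exact hx (q.fst_mem_support_of_mem_edges he)
  · rcases Sym2.eq_iff.mp he with ⟨rfl, -⟩ | ⟨-, rfl⟩
    · exact hx q.end_mem_support
    · exact hne rfl

lemma IsCycle.exists_isCycle_insert {v : V} {c : G.Walk v v} (hc : c.IsCycle) {x : V}
    (hx : x ∉ c.support) {i j : ℕ} (hij : i < j) (hj : j < c.length)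
    (hxi : G.Adj x (c.getVert i)) (hxj : G.Adj x (c.getVert j))
    (hadj : G.Adj (c.getVert (i + 1)) (c.getVert (j + 1))) :
    ∃ (a : V) (c' : G.Walk a a), c'.IsCycle ∧
      {y | y ∈ c'.support} = insert x {y | y ∈ c.support} := by
  set p := c.openAfter i
  set k := j - i - 1
  have hpk : p.getVert k = c.getVert j := by
    rw [getVert_openAfter c (by omega)]; congr 1; omega
  have hpk' : p.getVert (k + 1) = c.getVert (j + 1) := by
    rw [getVert_openAfter c (by omega)]; congr 1; omega
  have hk : k < p.length := by rw [length_openAfter c (by omega)]; omega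
  let q := (p.posaRotate k (hpk' ▸ hadj)).copy hpk rfl
  have hq : q.IsPath := (isPath_copy ..).mpr ((hc.isPath_openAfter (by omega)).posaRotate _ hk)
  have hq_perm : q.support ~ c.support.tail := by
    rw [support_copy]
    exact (p.support_posaRotate_perm _ hk).trans (c.support_openAfter_perm (by omega))
  have hmem : ∀ y, y ∈ q.support ↔ y ∈ c.support := fun y => by
    rw [hq_perm.mem_iff, mem_support_iff, or_iff_right_of_imp]
    rintro rfl
    exact end_mem_tail_support hc.not_nil
  have hne : c.getVert j ≠ c.getVert i := fun h =>
    (hc.getVert_injOn' (show j ≤ c.length - 1 by omega) (show i ≤ c.length - 1 by omega)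
      h).not_gt hij
  refine ⟨x, cons hxj (q.concat hxi.symm), ?_, ?_⟩
  · exact hq.isCycle_cons_concat (fun h => hx ((hmem x).mp h)) hne hxj hxi.symm
  · ext y
    simp [support_concat, hmem, or_comm]

end SimpleGraph.Walk

theorem stmt18_general (G : SimpleGraph V)
    (v : V) (C : G.Walk v v) (hC : C.IsCycle)
    (x : V) (hx : x ∉ C.support)
    (h : ∃ i j : ℕ, i < C.length ∧ j < C.length ∧
      G.Adj x (C.getVert i) ∧ G.Adj x (C.getVert j) ∧
      G.Adj (C.getVert (i + 1)) (C.getVert (j + 1))) :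
    ∃ (a : V) (C' : G.Walk a a), C'.IsCycle ∧
      {y | y ∈ C'.support} = insert x {y | y ∈ C.support} := by
  obtain ⟨i, j, hi, hj, hxi, hxj, hadj⟩ := h
  rcases lt_trichotomy i j with hij | rfl | hji
  · exact hC.exists_isCycle_insert hx hij hj hxi hxj hadj
  · exact (hadj.ne rfl).elim
  · exact hC.exists_isCycle_insert hx hji hi hxj hxi hadj.symm

theorem stmt18 [Fintype V] (G : SimpleGraph V)
    (v : V) (C : G.Walk v v) (hC : C.IsCycle)
    (x : V) (hx : x ∉ C.support)
    (h : ∃ i j : ℕ, i < C.length ∧ j < C.length ∧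
      G.Adj x (C.getVert i) ∧ G.Adj x (C.getVert j) ∧
      G.Adj (C.getVert (i + 1)) (C.getVert (j + 1))) :
    ∃ (a : V) (C' : G.Walk a a), C'.IsCycle ∧
      {y | y ∈ C'.support} = insert x {y | y ∈ C.support} :=
  stmt18_general G v C hC x hx h
end
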